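/- arXiv:2107.11899 — 4 statements merged into one kernel-verified Lean document; each statement's English description precedes it below -/
import Mathlib

section
/- Let r ≥ 1, let λ be a partition with an empty r-core, and let λ' be obtained from λ by peeling a single ribbon of length r (so that λ' also has an empty r-core). Then the row-color sequence a^(k)(λ') is obtained from a^(k)(λ) by a cyclic shift of a consecutive block of entries a_{i_1},…,a_{i_2}, where i_1,…,i_2 are the indices of the rows meeting the removed ribbon; in particular a^(k)(λ') is a permutation of a^(k)(λ). -/
/-- Boundary sequence of a partition (list of parts, weakly decreasing,
zero parts allowed and give leading `false`s): walk along the SE boundary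
from SW corner to NE corner, `true` = east step, `false` = north step. -/
def bseq : List ℕ → List Bool
  | [] => []
  | a :: s => bseq s ++ List.replicate (a - s.headI) true ++ [false]

/-- A partition: weakly decreasing list of positive integers. -/
def IsPartition (l : List ℕ) : Prop := l.Pairwise (· ≥ ·) ∧ ∀ x ∈ l, 0 < x

/-- The set of cells of the Young diagram (English convention, 0-indexed):
cell `(i, j)` is present iff `j < l_i`. -/
def cellSet (l : List ℕ) : Set (ℕ × ℕ) := {p | p.2 < l.getD p.1 0}

/-- Two cells are adjacent if they share an edge. -/
def CellAdj (p q : ℕ × ℕ) : Prop :=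
  (p.1 = q.1 ∧ (p.2 + 1 = q.2 ∨ q.2 + 1 = p.2)) ∨
  (p.2 = q.2 ∧ (p.1 + 1 = q.1 ∨ q.1 + 1 = p.1))

/-- A set of cells is connected (via edge-adjacency within the set). -/
def ConnSet (S : Set (ℕ × ℕ)) : Prop :=
  ∀ p ∈ S, ∀ q ∈ S, Relation.ReflTransGen (fun a b => b ∈ S ∧ CellAdj a b) p q

/-- A ribbon (border strip) of length `m`: a connected set of `m` cells
containing no 2×2 square. -/
 def IsRibbonSet (S : Set (ℕ × ℕ)) (m : ℕ) : Prop :=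
  S.ncard = m ∧ ConnSet S ∧
  ∀ i j : ℕ, ¬((i, j) ∈ S ∧ (i + 1, j) ∈ S ∧ (i, j + 1) ∈ S ∧ (i + 1, j + 1) ∈ S)

/-- `l'` is obtained from `l` by peeling a ribbon of length `m`. -/
def PeelRibbon (m : ℕ) (l l' : List ℕ) : Prop :=
  IsPartition l' ∧ cellSet l' ⊂ cellSet l ∧ IsRibbonSet (cellSet l \ cellSet l') m

/-- `l` has an empty `r`-core: it can be reduced to the empty partition by
successively peeling ribbons of length `r`. -/
def EmptyCore (r : ℕ) (l : List ℕ) : Prop :=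
  Relation.ReflTransGen (fun x y => PeelRibbon r x y) l []

/-- The row-color sequence `a^(k)(λ)`: `a_i = (ℓ_i + k - i) mod r` (1-indexed),
here 0-indexed as `(l_i + k - i - 1) % r`. -/
def rcs (r k : ℕ) (l : List ℕ) : List ℕ :=
  (List.range k).map (fun i => (l.getD i 0 + k - i - 1) % r)

/-- Inversion number of a word over a linearly ordered alphabet. -/
def invOn {α : Type*} [LinearOrder α] (w : List α) : ℕ :=
  (w.tails.map (fun t => match t with
    | [] => 0
    | a :: s => (s.filter (fun b => decide (b < a))).length)).sum

/-- `m_i` for a 0/1 (false/true) sequence: the number of `true`s among the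
first `i` entries minus the number of `false`s among the remaining entries. -/
def mval (δ : List Bool) (i : ℕ) : ℤ :=
  ((δ.take i).count true : ℤ) - ((δ.drop i).count false : ℤ)

/-- The anchor of a 0/1 sequence is at position `i` (between indices `i` and
`i+1`) iff the number of `true`s before it equals the number of `false`s after it. -/
def AnchorAt (δ : List Bool) (i : ℕ) : Prop :=
  (δ.take i).count true = (δ.drop i).count false

/-- The graph of the map `φ_r`: `IsPhi r Λ l` says that `l = φ_r (Λ 0, …, Λ (r-1))`,
i.e. the boundary sequences of the `Λ j` can be padded with leading `false`s and
trailing `true`s to a common length `t` and a common anchor position `i₀`, and the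
interlaced sequence is a padding of the boundary sequence of `l`. -/
def IsPhi (r : ℕ) (Λ : ℕ → List ℕ) (l : List ℕ) : Prop :=
  ∃ (t i₀ : ℕ) (s : ℕ → List Bool) (p q : ℕ → ℕ),
    (∀ j < r,
      s j = List.replicate (p j) false ++ bseq (Λ j) ++ List.replicate (q j) true ∧
      (s j).length = t ∧ AnchorAt (s j) i₀) ∧
    ∃ P Q : ℕ,
      List.replicate P false ++ bseq l ++ List.replicate Q true =
        (List.range (r * t)).map (fun v => (s (v % r)).getD (v / r) false)

/-- The height of a ribbon: one less than its number of rows. -/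
noncomputable def htOf (S : Set (ℕ × ℕ)) : ℕ := (Prod.fst '' S).ncard - 1

/-!
Write `β_i = λ_i - i` for the beta-numbers of a partition (the bead positions on an abacus).
A ribbon in rows `i₁, …, i₂` overlaps each following row in exactly one column, so peeling a
ribbon of length `r` sets `β'_i = β_{i+1}` for `i₁ ≤ i < i₂` and `β'_{i₂} = β_{i₁} - r`: it
slides one bead from `x` to the empty position `x - r`. The row colour `a_i` is
`β_i + k - 1 mod r`, so `a'_i = a_{σ i}` for the cycle `σ = blockCycle i₁ i₂`, using
`β'_{i₂} ≡ β_{i₁} (mod r)` in row `i₂`.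

Two different bead slides commute, so two different peelings of one partition can both be
continued to a common partition. By induction on the size, a partition obtained by peeling
from one with empty `r`-core has empty `r`-core as well.
-/

open Relation

theorem lt_length_of_lt_getD {l : List ℕ} {i a : ℕ} (h : a < l.getD i 0) : i < l.length := by
  by_contra hi
  rw [List.getD_eq_default _ _ (not_lt.mp hi)] at h
  exact Nat.not_lt_zero _ h

namespace IsPartition

variable {l l' : List ℕ}

theorem getD_antitone (hl : IsPartition l) : Antitone (l.getD · 0) := by
  intro i j hij
  dsimp only
  rcases lt_or_ge j l.length with hj | hj
  · rw [List.getD_eq_getElem _ _ hj, List.getD_eq_getElem _ _ (hij.trans_lt hj)]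
    rcases hij.lt_or_eq with hlt | rfl
    · exact List.pairwise_iff_getElem.mp hl.1 i j _ hj hlt
    · rfl
  · rw [List.getD_eq_default _ _ hj]
    exact Nat.zero_le _

theorem getD_pos_iff (hl : IsPartition l) {i : ℕ} : 0 < l.getD i 0 ↔ i < l.length := by
  refine ⟨lt_length_of_lt_getD, fun hi => ?_⟩
  rw [List.getD_eq_getElem _ _ hi]
  exact hl.2 _ (List.getElem_mem _)

theorem ext_getD (hl : IsPartition l) (hl' : IsPartition l')
    (h : ∀ i, l.getD i 0 = l'.getD i 0) : l = l' := by
  have hlt : ∀ i, i < l.length ↔ i < l'.length := fun i => by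
    rw [← hl.getD_pos_iff, ← hl'.getD_pos_iff, h]
  have hlen : l.length = l'.length :=
    le_antisymm (le_of_forall_lt fun i => (hlt i).mp) (le_of_forall_lt fun i => (hlt i).mpr)
  refine List.ext_getElem hlen fun i h₁ h₂ => ?_
  rw [← List.getD_eq_getElem _ 0 h₁, ← List.getD_eq_getElem _ 0 h₂, h]

end IsPartition

theorem exists_isPartition_getD_eq {g : ℕ → ℕ} (hg : Antitone g) (hzero : ∃ n, g n = 0) :
    ∃ c, IsPartition c ∧ ∀ i, c.getD i 0 = g i := by
  classical
  have hpos : ∀ i < Nat.find hzero, 0 < g i := fun i hi =>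
    Nat.pos_of_ne_zero (Nat.find_min hzero hi)
  refine ⟨(List.range (Nat.find hzero)).map g, ⟨?_, ?_⟩, fun i => ?_⟩
  · exact List.pairwise_map.mpr (List.pairwise_lt_range.imp fun hij => hg hij.le)
  · simpa using hpos
  · rcases lt_or_ge i (Nat.find hzero) with hi | hi
    · simp [hi]
    · rw [List.getD_eq_default _ _ (by simpa using hi)]
      exact (Nat.le_zero.mp (Nat.find_spec hzero ▸ hg hi)).symm

section CellSet

variable {l l' : List ℕ}

@[simp]
theorem mem_cellSet_sdiff {i j : ℕ} :
    (i, j) ∈ cellSet l \ cellSet l' ↔ l'.getD i 0 ≤ j ∧ j < l.getD i 0 := by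
  simp [cellSet, and_comm]

theorem exists_mem_cellSet_sdiff_iff {i : ℕ} :
    (∃ j, (i, j) ∈ cellSet l \ cellSet l') ↔ l'.getD i 0 < l.getD i 0 := by
  simp only [mem_cellSet_sdiff]
  exact ⟨fun ⟨_, h₁, h₂⟩ => h₁.trans_lt h₂, fun h => ⟨_, le_rfl, h⟩⟩

theorem cellSet_subset_cellSet_iff :
    cellSet l' ⊆ cellSet l ↔ ∀ i, l'.getD i 0 ≤ l.getD i 0 :=
  ⟨fun h i => not_lt.mp fun hlt =>
      lt_irrefl (l.getD i 0) (h (show (i, l.getD i 0) ∈ cellSet l' from hlt)),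
    fun h p hp => lt_of_lt_of_le hp (h p.1)⟩

theorem cellSet_sdiff_eq_biUnion {s : Finset ℕ} (hs : ∀ i, l'.getD i 0 < l.getD i 0 → i ∈ s) :
    cellSet l \ cellSet l' =
      ↑(s.biUnion fun i => {i} ×ˢ Finset.Ico (l'.getD i 0) (l.getD i 0)) := by
  ext ⟨i, j⟩
  simp only [mem_cellSet_sdiff, Finset.coe_biUnion, Set.mem_iUnion, Finset.mem_coe,
    Finset.mem_product, Finset.mem_singleton, Finset.mem_Ico]
  constructor
  · rintro ⟨h₁, h₂⟩
    exact ⟨i, hs i (h₁.trans_lt h₂), rfl, h₁, h₂⟩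
  · rintro ⟨_, _, rfl, h⟩
    exact h

@[simp]
theorem cellSet_nil : cellSet [] = ∅ := by
  ext
  simp [cellSet]

theorem cellSet_finite (l : List ℕ) : (cellSet l).Finite := by
  have := cellSet_sdiff_eq_biUnion (l := l) (l' := []) (s := Finset.range l.length)
    fun i hi => Finset.mem_range.mpr (lt_length_of_lt_getD hi)
  rw [cellSet_nil, Set.sdiff_empty] at this
  exact this ▸ Finset.finite_toSet _

theorem ncard_cellSet_sdiff {s : Finset ℕ} (hs : ∀ i, l'.getD i 0 < l.getD i 0 → i ∈ s) :
    (cellSet l \ cellSet l').ncard = ∑ i ∈ s, (l.getD i 0 - l'.getD i 0) := by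
  rw [cellSet_sdiff_eq_biUnion hs, Set.ncard_coe_finset, Finset.card_biUnion]
  · simp
  · intro a _ b _ hab
    exact Finset.disjoint_product.mpr (Or.inl (Finset.disjoint_singleton.mpr hab))

end CellSet

section CellPaths

variable {S : Set (ℕ × ℕ)} {p q : ℕ × ℕ}

theorem mem_of_reflTransGen_cellAdj (hp : p ∈ S)
    (h : ReflTransGen (fun a b => b ∈ S ∧ CellAdj a b) p q) : q ∈ S := by
  induction h with
  | refl => exact hp
  | tail _ hbc _ => exact hbc.1

theorem reflTransGen_cellAdj_symm (hp : p ∈ S)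
    (h : ReflTransGen (fun a b => b ∈ S ∧ CellAdj a b) p q) :
    ReflTransGen (fun a b => b ∈ S ∧ CellAdj a b) q p := by
  induction h with
  | refl => exact .refl
  | @tail b c hpb hbc ih =>
    refine .head ⟨mem_of_reflTransGen_cellAdj hp hpb, ?_⟩ ih
    obtain ⟨-, h | h⟩ := hbc
    exacts [.inl ⟨h.1.symm, h.2.symm⟩, .inr ⟨h.1.symm, h.2.symm⟩]

theorem exists_vertical_step_of_reflTransGen (hp : p ∈ S)
    (h : ReflTransGen (fun a b => b ∈ S ∧ CellAdj a b) p q) {i : ℕ} (hpi : p.1 ≤ i)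
    (hqi : i < q.1) : ∃ j, (i, j) ∈ S ∧ (i + 1, j) ∈ S := by
  induction h with
  | refl => omega
  | @tail b c hpb hbc ih =>
    rcases lt_or_ge i b.1 with hb | hb
    · exact ih hb
    · obtain ⟨b1, b2⟩ := b
      obtain ⟨c1, c2⟩ := c
      obtain ⟨hc, ⟨hbc1, -⟩ | ⟨rfl, hbc1⟩⟩ := hbc
      · dsimp only at *; omega
      · obtain ⟨rfl, rfl⟩ : b1 = i ∧ c1 = i + 1 := by dsimp only at *; omega
        exact ⟨b2, mem_of_reflTransGen_cellAdj hp hpb, hc⟩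

theorem ConnSet.ordConnected_rows (hS : ConnSet S) : Set.OrdConnected {i | ∃ j, (i, j) ∈ S} := by
  refine Set.ordConnected_iff.mpr fun a ⟨ja, ha⟩ b ⟨jb, hb⟩ _ c ⟨hac, hcb⟩ => ?_
  rcases hac.eq_or_lt with rfl | hac
  · exact ⟨ja, ha⟩
  obtain ⟨j, -, hj⟩ := exists_vertical_step_of_reflTransGen ha (hS _ ha _ hb)
    (show a ≤ c - 1 by omega) (show c - 1 < b by omega)
  exact ⟨j, by rwa [Nat.sub_add_cancel (by omega)] at hj⟩

end CellPaths

theorem PeelRibbon.exists_rows_eq_Icc {r : ℕ} {l l' : List ℕ} (h : PeelRibbon r l l') :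
    ∃ i₁ i₂, {i | ∃ j, (i, j) ∈ cellSet l \ cellSet l'} = Set.Icc i₁ i₂ := by
  set I := {i | ∃ j, (i, j) ∈ cellSet l \ cellSet l'}
  have hne : I.Nonempty := by
    obtain ⟨⟨i, j⟩, hp⟩ := Set.nonempty_of_ssubset h.2.1
    exact ⟨i, j, hp⟩
  have hbdd : BddAbove I := ⟨l.length, fun i ⟨j, hj⟩ =>
    (lt_length_of_lt_getD (mem_cellSet_sdiff.mp hj).2).le⟩
  exact ⟨_, _, (hne.ordConnected_iff_of_bdd (OrderBot.bddBelow I) hbdd).mp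
    h.2.2.2.1.ordConnected_rows⟩

section BlockCycle

variable {i₁ i₂ : ℕ}

def blockCycle (i₁ i₂ i : ℕ) : ℕ :=
  if i < i₁ ∨ i₂ < i then i else if i = i₂ then i₁ else i + 1

theorem blockCycle_self_right (h : i₁ ≤ i₂) : blockCycle i₁ i₂ i₂ = i₁ := by
  simp [blockCycle]; omega

theorem blockCycle_injective : Function.Injective (blockCycle i₁ i₂) := by
  intro a b h
  unfold blockCycle at h
  split_ifs at h <;> omega

theorem blockCycle_surjective : Function.Surjective (blockCycle i₁ i₂) := by
  intro j
  by_cases hj : j < i₁ ∨ i₂ < j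
  · exact ⟨j, by simp [blockCycle, hj]⟩
  by_cases hj' : j = i₁
  · exact ⟨i₂, by unfold blockCycle; split_ifs <;> omega⟩
  · exact ⟨j - 1, by unfold blockCycle; split_ifs <;> omega⟩

theorem blockCycle_lt {n i : ℕ} (hi : i < n) (hi₂ : i₂ < n) : blockCycle i₁ i₂ i < n := by
  unfold blockCycle; split_ifs <;> omega

theorem perm_map_blockCycle_range {n : ℕ} (hi₂ : i₂ < n) :
    ((List.range n).map (blockCycle i₁ i₂)).Perm (List.range n) := by
  refine (List.perm_ext_iff_of_nodup (List.nodup_range.map blockCycle_injective)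
    List.nodup_range).mpr fun j => ?_
  simp only [List.mem_map, List.mem_range]
  refine ⟨fun ⟨i, hi, hij⟩ => hij ▸ blockCycle_lt hi hi₂, fun hj => ?_⟩
  obtain ⟨i, rfl⟩ := blockCycle_surjective (i₁ := i₁) (i₂ := i₂) j
  refine ⟨i, not_le.mp fun hi => ?_, rfl⟩
  have : blockCycle i₁ i₂ i = i := by simp [blockCycle]; omega
  omega

end BlockCycle

def beta (l : List ℕ) (i : ℕ) : ℤ := l.getD i 0 - i

def betaSet (l : List ℕ) : Set ℤ := Set.range (beta l)

def slideBead (S : Set ℤ) (x : ℤ) (r : ℕ) : Set ℤ := insert (x - r) (S \ {x})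

theorem beta_of_length_le {l : List ℕ} {i : ℕ} (h : l.length ≤ i) : beta l i = -i := by
  rw [beta, List.getD_eq_default _ _ h, Nat.cast_zero, zero_sub]

theorem IsPartition.beta_strictAnti {l : List ℕ} (hl : IsPartition l) : StrictAnti (beta l) :=
  fun i j hij => by
    have : l.getD j 0 ≤ l.getD i 0 := hl.getD_antitone hij.le
    simp only [beta]; omega

theorem IsPartition.eq_of_betaSet_eq {l l' : List ℕ} (hl : IsPartition l) (hl' : IsPartition l')
    (h : betaSet l = betaSet l') : l = l' := by
  have := (hl.beta_strictAnti.dual_right.range_inj hl'.beta_strictAnti.dual_right).mp h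
  exact hl.ext_getD hl' fun i => by
    have : beta l i = beta l' i := congrFun this i
    simp only [beta] at this
    omega

theorem sum_Icc_sub_getD_eq {l l' : List ℕ} {i₁ i₂ : ℕ} (hle : ∀ i, l'.getD i 0 ≤ l.getD i 0)
    (h12 : i₁ ≤ i₂) (hstep : ∀ i, i₁ ≤ i → i < i₂ → beta l' i = beta l (i + 1)) :
    ((∑ i ∈ Finset.Icc i₁ i₂, (l.getD i 0 - l'.getD i 0) : ℕ) : ℤ) = beta l i₁ - beta l' i₂ := by
  induction i₂, h12 using Nat.le_induction with
  | base =>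
    have := hle i₁
    simp only [Finset.Icc_self, Finset.sum_singleton, beta]
    omega
  | succ n hn ih =>
    rw [Finset.sum_Icc_succ_top (by omega), Nat.cast_add,
      ih fun i h₁ h₂ => hstep i h₁ (by omega), hstep n hn (by omega)]
    have := hle (n + 1)
    simp only [beta]
    push_cast
    omega

/-- `cellSet l \ cellSet l'` is a ribbon of length `r` in rows `i₁, …, i₂`, in beta-numbers:
consecutive rows of a ribbon share exactly one column (`l'_i + 1 = l_{i+1}`), and its
length telescopes to `β_{i₁} - β'_{i₂}`. -/
structure RibbonRows (r : ℕ) (l l' : List ℕ) (i₁ i₂ : ℕ) : Prop where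
  le : i₁ ≤ i₂
  beta_eq_of_lt_or_lt : ∀ i, i < i₁ ∨ i₂ < i → beta l' i = beta l i
  beta_eq_succ : ∀ i, i₁ ≤ i → i < i₂ → beta l' i = beta l (i + 1)
  beta_right : beta l' i₂ = beta l i₁ - r
  getD_lt : l'.getD i₂ 0 < l.getD i₂ 0

namespace PeelRibbon

variable {r : ℕ} {l l' : List ℕ}

theorem getD_le (h : PeelRibbon r l l') (i : ℕ) : l'.getD i 0 ≤ l.getD i 0 :=
  cellSet_subset_cellSet_iff.mp h.2.1.subset i

theorem getD_lt_getD_succ (h : PeelRibbon r l l') {i : ℕ} (hi : l'.getD i 0 < l.getD i 0)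
    (hi' : l'.getD (i + 1) 0 < l.getD (i + 1) 0) : l'.getD i 0 < l.getD (i + 1) 0 := by
  have hp : (i, l'.getD i 0) ∈ cellSet l \ cellSet l' := mem_cellSet_sdiff.mpr ⟨le_rfl, hi⟩
  have hq : (i + 1, l'.getD (i + 1) 0) ∈ cellSet l \ cellSet l' :=
    mem_cellSet_sdiff.mpr ⟨le_rfl, hi'⟩
  obtain ⟨j, hj, hj'⟩ :=
    exists_vertical_step_of_reflTransGen (i := i) hp (h.2.2.2.1 _ hp _ hq) le_rfl (Nat.lt_succ_self i)
  rw [mem_cellSet_sdiff] at hj hj'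
  omega

theorem getD_succ_le (h : PeelRibbon r l l') (hl : IsPartition l) {i : ℕ}
    (hi : l'.getD i 0 < l.getD i 0) : l.getD (i + 1) 0 ≤ l'.getD i 0 + 1 := by
  by_contra! hlt
  have : l'.getD (i + 1) 0 ≤ l'.getD i 0 := h.1.getD_antitone (Nat.le_succ i)
  have : l.getD (i + 1) 0 ≤ l.getD i 0 := hl.getD_antitone (Nat.le_succ i)
  exact h.2.2.2.2 i (l'.getD i 0) (by simp only [mem_cellSet_sdiff]; omega)

theorem ribbonRows (h : PeelRibbon r l l') (hl : IsPartition l) {i₁ i₂ : ℕ}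
    (hrows : {i | ∃ j, (i, j) ∈ cellSet l \ cellSet l'} = Set.Icc i₁ i₂) :
    RibbonRows r l l' i₁ i₂ := by
  have hrow : ∀ i, l'.getD i 0 < l.getD i 0 ↔ i₁ ≤ i ∧ i ≤ i₂ := fun i => by
    rw [← exists_mem_cellSet_sdiff_iff, ← Set.mem_Icc, ← hrows]
    rfl
  have h12 : i₁ ≤ i₂ := by
    obtain ⟨⟨i, j⟩, hp⟩ := Set.nonempty_of_ssubset h.2.1
    have := (hrow i).mp (exists_mem_cellSet_sdiff_iff.mp ⟨j, hp⟩)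
    omega
  have hstep : ∀ i, i₁ ≤ i → i < i₂ → beta l' i = beta l (i + 1) := fun i h₁ h₂ => by
    have hi := (hrow i).mpr ⟨h₁, h₂.le⟩
    have := h.getD_lt_getD_succ hi ((hrow (i + 1)).mpr ⟨by omega, h₂⟩)
    have := h.getD_succ_le hl hi
    simp only [beta]
    omega
  refine ⟨h12, fun i hi => ?_, hstep, ?_, (hrow i₂).mpr ⟨h12, le_rfl⟩⟩
  · have := (hrow i).not.mpr (by omega)
    have := h.getD_le i
    simp only [beta]
    omega
  · have hsum := sum_Icc_sub_getD_eq h.getD_le h12 hstep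
    rw [← ncard_cellSet_sdiff fun i hi => Finset.mem_Icc.mpr ((hrow i).mp hi), h.2.2.1] at hsum
    omega

end PeelRibbon

namespace RibbonRows

variable {r : ℕ} {l l' : List ℕ} {i₁ i₂ : ℕ}

theorem getD_lt_iff (h : RibbonRows r l l' i₁ i₂) (hl : IsPartition l) {i : ℕ} :
    l'.getD i 0 < l.getD i 0 ↔ i₁ ≤ i ∧ i ≤ i₂ := by
  have hlt : l'.getD i 0 < l.getD i 0 ↔ beta l' i < beta l i := by simp only [beta]; omega
  rw [hlt]
  by_cases hout : i < i₁ ∨ i₂ < i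
  · rw [h.beta_eq_of_lt_or_lt i hout]
    omega
  rcases lt_or_eq_of_le (not_lt.mp fun hi => hout (.inr hi)) with hi | rfl
  · rw [h.beta_eq_succ i (by omega) hi]
    exact iff_of_true (hl.beta_strictAnti (Nat.lt_succ_self i)) (by omega)
  · exact iff_of_true (hlt.mp h.getD_lt) ⟨h.le, le_rfl⟩

theorem getD_le (h : RibbonRows r l l' i₁ i₂) (hl : IsPartition l) (i : ℕ) :
    l'.getD i 0 ≤ l.getD i 0 := by
  by_cases hi : i₁ ≤ i ∧ i ≤ i₂
  · exact ((h.getD_lt_iff hl).mpr hi).le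
  · have := h.beta_eq_of_lt_or_lt i (by omega)
    simp only [beta] at this
    omega

theorem lt_length (h : RibbonRows r l l' i₁ i₂) : i₂ < l.length :=
  lt_length_of_lt_getD h.getD_lt

theorem ncard_eq (h : RibbonRows r l l' i₁ i₂) (hl : IsPartition l) :
    (cellSet l \ cellSet l').ncard = r := by
  have hsum := sum_Icc_sub_getD_eq (h.getD_le hl) h.le h.beta_eq_succ
  rw [← ncard_cellSet_sdiff fun i hi => Finset.mem_Icc.mpr ((h.getD_lt_iff hl).mp hi),
    h.beta_right] at hsum
  omega

theorem connSet (h : RibbonRows r l l' i₁ i₂) (hl : IsPartition l) (hl' : IsPartition l') :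
    ConnSet (cellSet l \ cellSet l') := by
  set S := cellSet l \ cellSet l'
  have hleft : ∀ i j j', l'.getD i 0 ≤ j → j ≤ j' → j' < l.getD i 0 →
      ReflTransGen (fun a b => b ∈ S ∧ CellAdj a b) (i, j') (i, j) := by
    intro i j j' hj hjj' hj'
    induction j', hjj' using Nat.le_induction with
    | base => exact .refl
    | succ n hn ih =>
      exact .head ⟨mem_cellSet_sdiff.mpr ⟨hj.trans hn, by omega⟩, .inl ⟨rfl, .inr rfl⟩⟩
        (ih (by omega))
  have hdown : ∀ i, i₁ ≤ i → i < i₂ → ReflTransGen (fun a b => b ∈ S ∧ CellAdj a b)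
      (i, l'.getD i 0) (i + 1, l'.getD (i + 1) 0) := by
    intro i h₁ h₂
    have hs := h.beta_eq_succ i h₁ h₂
    simp only [beta] at hs
    have hanti : l'.getD (i + 1) 0 ≤ l'.getD i 0 := hl'.getD_antitone (Nat.le_succ i)
    exact .head ⟨mem_cellSet_sdiff.mpr ⟨hanti, by omega⟩, .inr ⟨rfl, .inl rfl⟩⟩
      (hleft _ _ _ le_rfl hanti (by omega))
  have hcol : ∀ i ≤ i₂, i₁ ≤ i → ReflTransGen (fun a b => b ∈ S ∧ CellAdj a b)
      (i, l'.getD i 0) (i₂, l'.getD i₂ 0) := by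
    intro i h₂
    induction h₂ using Nat.decreasingInduction with
    | self => exact fun _ => .refl
    | of_succ i hi ih => exact fun h₁ => (hdown i h₁ hi).trans (ih (by omega))
  have hend : ∀ p ∈ S, ReflTransGen (fun a b => b ∈ S ∧ CellAdj a b) p (i₂, l'.getD i₂ 0) := by
    rintro ⟨i, j⟩ hp
    rw [mem_cellSet_sdiff] at hp
    obtain ⟨h₁, h₂⟩ := (h.getD_lt_iff hl).mp (hp.1.trans_lt hp.2)
    exact (hleft i _ j le_rfl hp.1 hp.2).trans (hcol i h₂ h₁)
  exact fun p hp q hq =>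
    (hend p hp).trans (reflTransGen_cellAdj_symm hq (hend q hq))

theorem peelRibbon (h : RibbonRows r l l' i₁ i₂) (hl : IsPartition l) (hl' : IsPartition l') :
    PeelRibbon r l l' := by
  have hsub : cellSet l' ⊆ cellSet l := cellSet_subset_cellSet_iff.mpr (h.getD_le hl)
  refine ⟨hl', (Set.ssubset_iff_of_subset hsub).mpr ?_, h.ncard_eq hl, h.connSet hl hl', ?_⟩
  · exact ⟨_, mem_cellSet_sdiff.mpr ⟨le_rfl, h.getD_lt⟩⟩
  · rintro i j ⟨h₁, -, -, h₄⟩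
    rw [mem_cellSet_sdiff] at h₁ h₄
    have hi := (h.getD_lt_iff hl).mp (h₁.1.trans_lt h₁.2)
    have hi' := (h.getD_lt_iff hl).mp (h₄.1.trans_lt h₄.2)
    have hs := h.beta_eq_succ i hi.1 (by omega)
    simp only [beta] at hs
    omega

theorem beta_eq_of_ne (h : RibbonRows r l l' i₁ i₂) {i : ℕ} (hi : i ≠ i₂) :
    beta l' i = beta l (blockCycle i₁ i₂ i) := by
  unfold blockCycle
  split_ifs with hout
  · exact h.beta_eq_of_lt_or_lt i hout
  · exact h.beta_eq_succ i (by omega) (by omega)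

theorem betaSet_eq (h : RibbonRows r l l' i₁ i₂) (hl : IsPartition l) :
    betaSet l' = slideBead (betaSet l) (beta l i₁) r := by
  ext z
  simp only [betaSet, slideBead, Set.mem_insert_iff, Set.mem_sdiff, Set.mem_range,
    Set.mem_singleton_iff]
  constructor
  · rintro ⟨i, rfl⟩
    by_cases hi : i = i₂
    · exact .inl (hi ▸ h.beta_right)
    · refine .inr ⟨⟨_, (h.beta_eq_of_ne hi).symm⟩, fun he => hi ?_⟩
      rw [h.beta_eq_of_ne hi, ← congrArg (beta l) (blockCycle_self_right h.le)] at he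
      exact blockCycle_injective (hl.beta_strictAnti.injective he)
  · rintro (rfl | ⟨⟨j, rfl⟩, hj⟩)
    · exact ⟨i₂, h.beta_right⟩
    · obtain ⟨i, rfl⟩ := blockCycle_surjective (i₁ := i₁) (i₂ := i₂) j
      have hi : i ≠ i₂ := by
        rintro rfl
        exact hj (by rw [blockCycle_self_right h.le])
      exact ⟨i, h.beta_eq_of_ne hi⟩

theorem sub_notMem_betaSet (h : RibbonRows r l l' i₁ i₂) (hl : IsPartition l)
    (hl' : IsPartition l') : beta l i₁ - r ∉ betaSet l := by
  have h₁ : beta l (i₂ + 1) < beta l i₁ - r := by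
    rw [← h.beta_eq_of_lt_or_lt (i₂ + 1) (.inr (Nat.lt_succ_self _)), ← h.beta_right]
    exact hl'.beta_strictAnti (Nat.lt_succ_self _)
  have h₂ : beta l i₁ - r < beta l i₂ := by
    have := h.getD_lt
    rw [← h.beta_right]
    simp only [beta]
    omega
  exact fun ⟨a, ha⟩ => hl.beta_strictAnti.antitone.ne_of_lt_of_lt_nat i₂ h₁ h₂ a ha

theorem color_eq (h : RibbonRows r l l' i₁ i₂) {k i : ℕ} (hi : i < k) (hi₂ : i₂ < k) :
    (l'.getD i 0 + k - i - 1) % r =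
      (l.getD (blockCycle i₁ i₂ i) 0 + k - blockCycle i₁ i₂ i - 1) % r := by
  have hcast : ∀ (L : List ℕ) {j : ℕ}, j < k → ((L.getD j 0 + k - j - 1 : ℕ) : ℤ) = beta L j + k - 1 :=
    fun L j hj => by simp only [beta]; omega
  apply Nat.cast_injective (R := ℤ)
  rw [Int.natCast_mod, Int.natCast_mod, hcast l' hi, hcast l (blockCycle_lt hi hi₂)]
  by_cases hi' : i = i₂
  · rw [hi', h.beta_right, blockCycle_self_right h.le,
      show beta l i₁ - r + k - 1 = beta l i₁ + k - 1 + r * (-1) by ring, Int.add_mul_emod_self_left]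
  · rw [h.beta_eq_of_ne hi']

end RibbonRows

theorem neg_le_of_strictAnti {f : ℕ → ℤ} (hf : StrictAnti f) {N : ℕ} (hN : f N = -N) {i : ℕ}
    (hi : i ≤ N) : -(i : ℤ) ≤ f i := by
  induction hi using Nat.decreasingInduction with
  | self => omega
  | of_succ i _ ih =>
    have := hf (Nat.lt_add_one i)
    push_cast at ih
    omega

theorem exists_isPartition_beta_eq {f : ℕ → ℤ} (hf : StrictAnti f) {N : ℕ}
    (hN : ∀ n, N ≤ n → f n = -n) : ∃ c, IsPartition c ∧ beta c = f := by
  have hnonneg : ∀ i, 0 ≤ f i + i := fun i => by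
    have := neg_le_of_strictAnti hf (hN (i + N) (by omega)) (by omega : i ≤ i + N)
    omega
  obtain ⟨c, hc, hcg⟩ := exists_isPartition_getD_eq (g := fun i => (f i + i).toNat)
    (antitone_nat_of_succ_le fun i => by have := hf (Nat.lt_add_one i); omega)
    ⟨N, by simp only [hN N le_rfl]; omega⟩
  refine ⟨c, hc, funext fun i => ?_⟩
  have := hnonneg i
  simp only [beta, hcg]
  omega

theorem exists_succ_lt_and_lt_of_notMem_range {α : Type*} [LinearOrder α] {f : ℕ → α} {z : α}
    (hz : z ∉ Set.range f) (h0 : z ≤ f 0) (hlow : ∃ n, f n < z) :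
    ∃ i, f (i + 1) < z ∧ z < f i := by
  classical
  obtain ⟨i, hi⟩ : ∃ i, Nat.find hlow = i + 1 := Nat.exists_eq_succ_of_ne_zero fun h =>
    (h ▸ Nat.find_spec hlow).not_ge h0
  refine ⟨i, hi ▸ Nat.find_spec hlow, ?_⟩
  exact lt_of_le_of_ne (not_lt.mp (Nat.find_min hlow (by omega))) fun he => hz ⟨i, he.symm⟩

def slideBeta (f : ℕ → ℤ) (i₁ i₂ : ℕ) (z : ℤ) (i : ℕ) : ℤ :=
  if i = i₂ then z else f (blockCycle i₁ i₂ i)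

theorem strictAnti_slideBeta {f : ℕ → ℤ} (hf : StrictAnti f) {i₁ i₂ : ℕ} {z : ℤ}
    (h₁ : f (i₂ + 1) < z) (h₂ : z < f i₂) : StrictAnti (slideBeta f i₁ i₂ z) :=
  strictAnti_nat_of_succ_lt fun i => by
    by_cases hi : i = i₂
    · simpa [slideBeta, hi, blockCycle] using h₁
    by_cases hi' : i + 1 = i₂
    · have : blockCycle i₁ i₂ i ≤ i₂ := by unfold blockCycle; split_ifs <;> omega
      have := hf.antitone this
      simp only [slideBeta, hi, hi', if_true, if_false]
      omega
    · have : blockCycle i₁ i₂ i < blockCycle i₁ i₂ (i + 1) := by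
        unfold blockCycle; split_ifs <;> omega
      simpa [slideBeta, hi, hi'] using hf this

theorem exists_ribbonRows {r : ℕ} {l : List ℕ} (hl : IsPartition l) {i₁ : ℕ}
    (hx : beta l i₁ - r ∉ betaSet l) : ∃ l' i₂, IsPartition l' ∧ RibbonRows r l l' i₁ i₂ := by
  set x := beta l i₁
  have hlow : ∃ n, beta l n < x - r :=
    ⟨l.length + (r - x).toNat + 1, by rw [beta_of_length_le (by omega)]; omega⟩
  have h0 : x - r ≤ beta l 0 := by
    have := hl.beta_strictAnti.antitone (Nat.zero_le i₁)
    omega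
  obtain ⟨i₂, h₁, h₂⟩ := exists_succ_lt_and_lt_of_notMem_range hx h0 hlow
  have h12 : i₁ ≤ i₂ := by
    by_contra
    have := hl.beta_strictAnti.antitone (show i₂ + 1 ≤ i₁ by omega)
    omega
  obtain ⟨c, hc, hbeta⟩ := exists_isPartition_beta_eq
    (strictAnti_slideBeta (i₁ := i₁) hl.beta_strictAnti h₁ h₂)
    (N := l.length + i₂ + 1) fun n hn => by
      have : blockCycle i₁ i₂ n = n := by simp [blockCycle]; omega
      simp only [slideBeta, this, if_neg (show n ≠ i₂ by omega)]
      exact beta_of_length_le (by omega)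
  refine ⟨c, i₂, hc, h12, fun i hi => ?_, fun i hi hi' => ?_, ?_, ?_⟩
  · simp [hbeta, slideBeta, blockCycle, hi, show i ≠ i₂ by omega]
  · simp [hbeta, slideBeta, blockCycle, show i ≠ i₂ by omega, show ¬ i < i₁ by omega,
      show ¬ i₂ < i by omega]
  · simp [hbeta, slideBeta, x]
  · have : beta c i₂ < beta l i₂ := by simpa [hbeta, slideBeta] using h₂
    simp only [beta] at this
    omega

theorem slideBead_comm (S : Set ℤ) {x y : ℤ} {r : ℕ} (hx : x - r ≠ y) (hy : y - r ≠ x) :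
    slideBead (slideBead S x r) y r = slideBead (slideBead S y r) x r := by
  rcases eq_or_ne x y with rfl | hxy
  · rfl
  have : x - r ≠ y - r := by omega
  ext z
  simp only [slideBead, Set.mem_insert_iff, Set.mem_sdiff, Set.mem_singleton_iff]
  grind

theorem mem_slideBead_of_ne {S : Set ℤ} {u v : ℤ} {r : ℕ} (hv : v ∈ S) (huv : u ≠ v) :
    v ∈ slideBead S u r :=
  .inr ⟨hv, huv.symm⟩

theorem sub_notMem_slideBead {S : Set ℤ} {u v : ℤ} {r : ℕ} (hvr : v - r ∉ S) (huv : u ≠ v) :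
    v - r ∉ slideBead S u r := by
  rintro (h | ⟨h, -⟩)
  exacts [huv (by omega), hvr h]

theorem PeelRibbon.exists_betaSet_eq {r : ℕ} {l l' : List ℕ} (h : PeelRibbon r l l')
    (hl : IsPartition l) :
    ∃ x ∈ betaSet l, x - r ∉ betaSet l ∧ betaSet l' = slideBead (betaSet l) x r := by
  obtain ⟨i₁, i₂, hrows⟩ := h.exists_rows_eq_Icc
  have hR := h.ribbonRows hl hrows
  exact ⟨_, ⟨i₁, rfl⟩, hR.sub_notMem_betaSet hl h.1, hR.betaSet_eq hl⟩

theorem exists_peelRibbon_of_mem_betaSet {r : ℕ} {l : List ℕ} (hl : IsPartition l) {x : ℤ}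
    (hx : x ∈ betaSet l) (hxr : x - r ∉ betaSet l) :
    ∃ l', PeelRibbon r l l' ∧ betaSet l' = slideBead (betaSet l) x r := by
  obtain ⟨i₁, rfl⟩ := hx
  obtain ⟨l', i₂, hl', h⟩ := exists_ribbonRows hl hxr
  exact ⟨l', h.peelRibbon hl hl', h.betaSet_eq hl⟩

theorem PeelRibbon.join {r : ℕ} {l a b : List ℕ} (hl : IsPartition l)
    (ha : PeelRibbon r l a) (hb : PeelRibbon r l b) (hab : a ≠ b) :
    Join (PeelRibbon r) a b := by
  obtain ⟨x, hx, hxr, hax⟩ := ha.exists_betaSet_eq hl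
  obtain ⟨y, hy, hyr, hby⟩ := hb.exists_betaSet_eq hl
  have hxy : x ≠ y := by
    rintro rfl
    exact hab (ha.1.eq_of_betaSet_eq hb.1 (hax.trans hby.symm))
  obtain ⟨c, hac, hc⟩ := exists_peelRibbon_of_mem_betaSet ha.1
    (hax ▸ mem_slideBead_of_ne hy hxy) (hax ▸ sub_notMem_slideBead hyr hxy)
  obtain ⟨c', hbc', hc'⟩ := exists_peelRibbon_of_mem_betaSet hb.1
    (hby ▸ mem_slideBead_of_ne hx hxy.symm) (hby ▸ sub_notMem_slideBead hxr hxy.symm)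
  have hcc' : c = c' := hac.1.eq_of_betaSet_eq hbc'.1 <| by
    rw [hc, hc', hax, hby, slideBead_comm _ (fun h => hxr (h ▸ hy)) (fun h => hyr (h ▸ hx))]
  exact ⟨c, hac, hcc' ▸ hbc'⟩

theorem EmptyCore.of_peelRibbon {r : ℕ} {l l' : List ℕ} (hl : IsPartition l)
    (hcore : EmptyCore r l) (hpeel : PeelRibbon r l l') : EmptyCore r l' := by
  induction hn : (cellSet l).ncard using Nat.strong_induction_on generalizing l l' with
  | _ n ih =>
  rcases hcore.cases_head with rfl | ⟨b, hb, hbcore⟩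
  · exact absurd (cellSet_nil ▸ hpeel.2.1) not_lt_bot
  by_cases hab : l' = b
  · exact hab ▸ hbcore
  obtain ⟨c, hl'c, hbc⟩ := hpeel.join hl hb hab
  have hlt : (cellSet b).ncard < n := hn ▸ Set.ncard_lt_ncard hb.2.1 (cellSet_finite l)
  exact .head hl'c (ih _ hlt hb.1 hbcore hbc rfl)

theorem rcs_getD {r k : ℕ} (l : List ℕ) {i : ℕ} (hi : i < k) :
    (rcs r k l).getD i 0 = (l.getD i 0 + k - i - 1) % r := by
  simp [rcs, hi]

theorem peeling_cyclically_shifts_row_colors_general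
    (r k : ℕ) (l l' : List ℕ) (hl : IsPartition l)
    (hcore : EmptyCore r l) (hpeel : PeelRibbon r l l') (hk : l.length ≤ k)
    (i₁ i₂ : ℕ)
    (hrows : {i : ℕ | ∃ j, (i, j) ∈ cellSet l \ cellSet l'} = Set.Icc i₁ i₂) :
    EmptyCore r l' ∧ i₁ ≤ i₂ ∧ i₂ < k ∧
    (∀ i < k, (rcs r k l').getD i 0 =
      if i < i₁ ∨ i₂ < i then (rcs r k l).getD i 0
      else if i = i₂ then (rcs r k l).getD i₁ 0
      else (rcs r k l).getD (i + 1) 0) ∧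
    (rcs r k l').Perm (rcs r k l) := by
  have hR := hpeel.ribbonRows hl hrows
  have hi₂ : i₂ < k := hR.lt_length.trans_le hk
  refine ⟨hcore.of_peelRibbon hl hpeel, hR.le, hi₂, fun i hi => ?_, ?_⟩
  · rw [rcs_getD l' hi, hR.color_eq hi hi₂, ← rcs_getD l (blockCycle_lt hi hi₂)]
    unfold blockCycle
    split_ifs <;> rfl
  · have hcolors : rcs r k l' = ((List.range k).map (blockCycle i₁ i₂)).map
        (fun j => (l.getD j 0 + k - j - 1) % r) := by
      rw [List.map_map]
      exact List.map_congr_left fun i hi => hR.color_eq (List.mem_range.mp hi) hi₂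
    exact hcolors ▸ (perm_map_blockCycle_range hi₂).map _

theorem peeling_cyclically_shifts_row_colors
    (r k : ℕ) (hr : 1 ≤ r) (l l' : List ℕ) (hl : IsPartition l)
    (hcore : EmptyCore r l) (hpeel : PeelRibbon r l l') (hk : l.length ≤ k)
    (i₁ i₂ : ℕ)
    (hrows : {i : ℕ | ∃ j, (i, j) ∈ cellSet l \ cellSet l'} = Set.Icc i₁ i₂) :
    EmptyCore r l' ∧ i₁ ≤ i₂ ∧ i₂ < k ∧
    (∀ i < k, (rcs r k l').getD i 0 =
      if i < i₁ ∨ i₂ < i then (rcs r k l).getD i 0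
      else if i = i₂ then (rcs r k l).getD i₁ 0
      else (rcs r k l).getD (i + 1) 0) ∧
    (rcs r k l').Perm (rcs r k l) :=
  peeling_cyclically_shifts_row_colors_general r k l l' hl hcore hpeel hk i₁ i₂ hrows
end

section
/- Let w and w' be rearrangements of each other over a linearly ordered alphabet, and suppose w' is obtained from w by cyclically shifting a consecutive block a_{i_1},…,a_{i_2} (moving a_{i_1} to position i_2 and shifting the rest left by one). Then inv(w) − inv(w') is congruent modulo 2 to the number of indices i with i_1 < i ≤ i_2 and a_i ≠ a_{i_1}. -/
/-!
Both words arise from `u ++ v ++ z` by inserting the letter `a`, once before `v` and once after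
it. An inserted letter contributes exactly the inversions it forms with the letters on either
side, so the two inversion numbers differ by `#{b ∈ v | b < a} - #{b ∈ v | a < b}`, which has
the parity of the sum `#{b ∈ v | b ≠ a}`.
-/

section InversionNumber

variable {α : Type*} [LinearOrder α]

@[simp]
lemma invOn_cons (x : α) (w : List α) :
    invOn (x :: w) = (w.filter (· < x)).length + invOn w := by
  simp [invOn]

lemma invOn_append_cons (v z : List α) (a : α) :
    invOn (v ++ a :: z) =
      invOn (v ++ z) + (v.filter (a < ·)).length + (z.filter (· < a)).length := by
  induction v with
  | nil => simp [add_comm]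
  | cons x v ih =>
    by_cases hax : a < x <;>
      simp [List.filter_append, hax, ih] <;> omega

lemma length_filter_lt_add_length_filter_gt (v : List α) (a : α) :
    (v.filter (· < a)).length + (v.filter (a < ·)).length = v.countP (· ≠ a) := by
  induction v with
  | nil => simp
  | cons b v ih =>
    simp only [List.filter_cons, List.countP_cons, ← ih]
    rcases lt_trichotomy b a with h | rfl | h
    · simp [h, h.ne, not_lt.2 h.le]; omega
    · simp
    · simp [h, h.ne', not_lt.2 h.le]; omega

lemma invOn_sub_invOn_cyclic_shift (u v z : List α) (a : α) :
    (invOn (u ++ a :: v ++ z) : ℤ) - invOn (u ++ (v ++ [a]) ++ z) =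
      (v.filter (· < a)).length - (v.filter (a < ·)).length := by
  have hleft : u ++ a :: v ++ z = u ++ a :: (v ++ z) := by simp
  have hright : u ++ (v ++ [a]) ++ z = (u ++ v) ++ a :: z := by simp
  rw [hleft, hright, invOn_append_cons, invOn_append_cons]
  simp only [List.append_assoc, List.filter_append, List.length_append]
  push_cast
  ring

end InversionNumber

theorem inv_parity_of_cyclic_shift
    {α : Type*} [LinearOrder α] (u v z : List α) (a : α) :
    ((invOn (u ++ a :: v ++ z) : ℤ) - (invOn (u ++ (v ++ [a]) ++ z) : ℤ)) ≡
      ((v.countP (fun b => decide (b ≠ a)) : ℕ) : ℤ) [ZMOD 2] := by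
  rw [invOn_sub_invOn_cyclic_shift, ← length_filter_lt_add_length_filter_gt]
  exact Int.modEq_iff_dvd.2 ⟨(v.filter (a < ·)).length, by push_cast; ring⟩
end

section
/- (Lübeck–Prasad identity, combinatorial form for r = 2) For every partition λ of 2n with an empty 2-core and every partition μ of n, the irreducible character of the hyperoctahedral group B_n = Z_2 ≀ S_n indexed by the 2-quotient of λ, evaluated at the conjugacy class of type (μ, ∅), equals ε(λ)·χ^λ_{2μ}, where χ^λ_{2μ} is the irreducible character of S_{2n} indexed by λ evaluated on the class of cycle type 2μ = (2μ_1,…,2μ_t), and ε(λ) = (−1)^{odd(λ)/2} with odd(λ) the number of odd parts of λ. -/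
/-- Murnaghan–Nakayama recursion for the value `χ^λ_ν` of the irreducible
`S_m`-character indexed by the partition with boundary sequence `δ`, at a
conjugacy class of cycle type `ν`. Removing a ribbon of length `m` amounts to
switching entries `δ_q = 1` (true) and `δ_{q+m} = 0` (false); the sign is
`(-1)` to the number of `0`s strictly between them. -/
def chiW : List Bool → List ℕ → ℤ
  | δ, [] => if δ.Pairwise (· ≤ ·) then 1 else 0
  | δ, m :: rest =>
    ∑ q ∈ Finset.range δ.length,
      if q + m < δ.length ∧ δ.getD q false = true ∧ δ.getD (q + m) true = false then
        (-1 : ℤ) ^ (((δ.drop (q + 1)).take (m - 1)).count false) *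
          chiW ((δ.set q false).set (q + m) true) rest
      else 0

/-- Murnaghan–Nakayama recursion for the value of the irreducible character of
the hyperoctahedral group `B_n = ℤ/2 ≀ S_n` indexed by the pair of partitions
with boundary sequences `(δ₀, δ₁)`, at the conjugacy class `(μ, ∅)` (all cycles
of color `0`, cycle lengths `μ`): at each step a ribbon is removed from one of
the two components. -/
def psi2 : List Bool → List Bool → List ℕ → ℤ
  | δ₀, δ₁, [] => if δ₀.Pairwise (· ≤ ·) ∧ δ₁.Pairwise (· ≤ ·) then 1 else 0
  | δ₀, δ₁, m :: rest =>
    (∑ q ∈ Finset.range δ₀.length,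
      if q + m < δ₀.length ∧ δ₀.getD q false = true ∧ δ₀.getD (q + m) true = false then
        (-1 : ℤ) ^ (((δ₀.drop (q + 1)).take (m - 1)).count false) *
          psi2 ((δ₀.set q false).set (q + m) true) δ₁ rest
      else 0) +
    (∑ q ∈ Finset.range δ₁.length,
      if q + m < δ₁.length ∧ δ₁.getD q false = true ∧ δ₁.getD (q + m) true = false then
        (-1 : ℤ) ^ (((δ₁.drop (q + 1)).take (m - 1)).count false) *
          psi2 δ₀ ((δ₁.set q false).set (q + m) true) rest
      else 0)

/-!
Boundary words encode partitions, and `IsPhi` says that the padded boundary word of `λ` interlaces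
padded boundary words of the two components, which have equally many `false`s. Both sides obey a
Murnaghan–Nakayama recursion, and a ribbon of length `m` in a component is exactly a ribbon of
length `2m` in the interlaced word: a `true` moving `2m` places. The two recursions weigh such a
ribbon with signs differing by `(-1) ^ O`, where `O` counts the `false`s of the other component
that the ribbon passes. This is absorbed by `ε`: the move shortens by one every row strictly inside
the ribbon, and counting those rows by parity shows that `⌊odd / 2⌋` changes by `O` modulo 2.
When the recursion ends, both sides equal `1` exactly when the interlaced word is sorted, i.e. when
both components are, and then `ε = 1`.
-/

theorem Finset.sum_range_two_mul {M : Type*} [AddCommMonoid M] (f : ℕ → M) (n : ℕ) :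
    ∑ k ∈ Finset.range (2 * n), f k =
      ∑ i ∈ Finset.range n, f (2 * i) + ∑ i ∈ Finset.range n, f (2 * i + 1) := by
  induction n with
  | zero => simp
  | succ n ih =>
    rw [show 2 * (n + 1) = 2 * n + 1 + 1 by ring, Finset.sum_range_succ, Finset.sum_range_succ,
      ih, Finset.sum_range_succ, Finset.sum_range_succ]
    abel

theorem Finset.sum_range_two_mul_add_one {M : Type*} [AddCommMonoid M] (f : ℕ → M) (n : ℕ) :
    ∑ k ∈ Finset.range (2 * n + 1), f k =
      ∑ i ∈ Finset.range (n + 1), f (2 * i) + ∑ i ∈ Finset.range n, f (2 * i + 1) := by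
  rw [Finset.sum_range_succ, Finset.sum_range_two_mul, Finset.sum_range_succ]
  abel

theorem Nat.succ_choose_two (n : ℕ) : (n + 1).choose 2 = n.choose 2 + n := by
  rw [Nat.choose_succ_succ', Nat.choose_one_right, add_comm]

theorem Nat.choose_two_mod_two (n : ℕ) : n.choose 2 % 2 = n / 2 % 2 := by
  induction n with
  | zero => rfl
  | succ n ih =>
    rw [Nat.succ_choose_two]
    rcases Nat.even_or_odd' n with ⟨k, rfl | rfl⟩ <;> omega

theorem Nat.mul_add_eq_mul_add_iff {r k c k' c' : ℕ} (hc : c < r) (hc' : c' < r) :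
    r * k + c = r * k' + c' ↔ k = k' ∧ c = c' := by
  refine ⟨fun h => ⟨?_, ?_⟩, fun h => by rw [h.1, h.2]⟩
  · have := congrArg (· / r) h
    simpa [Nat.mul_add_div (by omega : 0 < r), Nat.div_eq_of_lt hc, Nat.div_eq_of_lt hc'] using this
  · have := congrArg (· % r) h
    simpa [Nat.mul_add_mod, Nat.mod_eq_of_lt hc, Nat.mod_eq_of_lt hc'] using this

namespace BoundaryWord

open Finset

def falseAt (d : List Bool) (p : ℕ) : ℕ := if d[p]? = some false then 1 else 0

def trueAt (d : List Bool) (p : ℕ) : ℕ := if d[p]? = some true then 1 else 0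

def truesBefore (d : List Bool) (p : ℕ) : ℕ := ∑ k ∈ range p, trueAt d k

/-- In a boundary word every `false` is a row whose length is the number of `true`s before it,
so this counts the rows of odd length. -/
def oddRows (d : List Bool) : ℕ := ∑ p ∈ range d.length, falseAt d p * (truesBefore d p % 2)

/-- The sign `ε(λ) = (-1) ^ (odd(λ) / 2)`. -/
def epsilon (d : List Bool) : ℤ := (-1) ^ (oddRows d / 2)

variable {d : List Bool} {p : ℕ}

lemma lt_length_of_getElem?_eq_some {α : Type*} {l : List α} {a : α} (h : l[p]? = some a) :
    p < l.length :=
  (List.getElem?_eq_some_iff.mp h).1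

lemma getD_false_eq_true_iff : d.getD p false = true ↔ d[p]? = some true := by
  cases h : d[p]? <;> simp [List.getD_eq_getElem?_getD, h]

lemma getD_true_eq_false_iff : d.getD p true = false ↔ d[p]? = some false := by
  cases h : d[p]? <;> simp [List.getD_eq_getElem?_getD, h]

lemma falseAt_add_trueAt (h : p < d.length) : falseAt d p + trueAt d p = 1 := by
  simp only [falseAt, trueAt, List.getElem?_eq_getElem h]
  cases d[p] <;> rfl

lemma falseAt_le_one (d : List Bool) (p : ℕ) : falseAt d p ≤ 1 := by
  unfold falseAt; split <;> omega

lemma sum_falseAt_eq_count (l : List Bool) : ∑ k ∈ range l.length, falseAt l k = l.count false := by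
  induction l with
  | nil => rfl
  | cons b l ih =>
    rw [List.length_cons, sum_range_succ', List.count_cons, ← ih]
    cases b <;> simp [falseAt]

lemma sum_trueAt_eq_count (l : List Bool) : ∑ k ∈ range l.length, trueAt l k = l.count true := by
  induction l with
  | nil => rfl
  | cons b l ih =>
    rw [List.length_cons, sum_range_succ', List.count_cons, ← ih]
    cases b <;> simp [trueAt]

lemma count_false_take_drop {a b : ℕ} (h : a + b ≤ d.length) :
    ((d.drop a).take b).count false = ∑ k ∈ range b, falseAt d (a + k) := by
  rw [← sum_falseAt_eq_count, List.length_take, List.length_drop, min_eq_left (by omega)]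
  refine sum_congr rfl fun k hk => ?_
  simp [falseAt, mem_range.mp hk]

lemma truesBefore_length (d : List Bool) : truesBefore d d.length = d.count true :=
  sum_trueAt_eq_count d

lemma truesBefore_add_sum_falseAt {a n : ℕ} (h : a + n ≤ d.length) :
    truesBefore d (a + n) + ∑ k ∈ range n, falseAt d (a + k) = truesBefore d a + n := by
  have hone : ∀ k ∈ range n, trueAt d (a + k) + falseAt d (a + k) = 1 := fun k hk => by
    rw [add_comm]; exact falseAt_add_trueAt (by have := mem_range.mp hk; omega)
  rw [truesBefore, sum_range_add, add_assoc, ← sum_add_distrib, sum_congr rfl hone]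
  simp [truesBefore]

lemma truesBefore_cons_false (δ : List Bool) (p : ℕ) :
    truesBefore (false :: δ) (p + 1) = truesBefore δ p := by
  simp only [truesBefore, sum_range_succ', trueAt, List.getElem?_cons_succ,
    List.getElem?_cons_zero, Option.some.injEq, Bool.false_eq_true, if_false, add_zero]

lemma oddRows_cons_false (δ : List Bool) : oddRows (false :: δ) = oddRows δ := by
  rw [oddRows, List.length_cons, sum_range_succ']
  simp only [truesBefore_cons_false, falseAt, List.getElem?_cons_succ]
  simp [oddRows, falseAt, truesBefore]

lemma truesBefore_append {δ : List Bool} {p : ℕ} (δ' : List Bool) (hp : p ≤ δ.length) :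
    truesBefore (δ ++ δ') p = truesBefore δ p :=
  sum_congr rfl fun k hk => by
    simp [trueAt, List.getElem?_append_left (lt_of_lt_of_le (mem_range.mp hk) hp)]

lemma oddRows_concat (δ : List Bool) (b : Bool) :
    oddRows (δ ++ [b]) = oddRows δ + if b then 0 else δ.count true % 2 := by
  rw [oddRows, List.length_append, List.length_singleton, sum_range_succ,
    truesBefore_append _ le_rfl, truesBefore_length]
  congr 1
  · refine sum_congr rfl fun p hp => ?_
    have hp := mem_range.mp hp
    rw [truesBefore_append _ hp.le, falseAt, falseAt, List.getElem?_append_left hp]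
  · cases b <;> simp [falseAt]

lemma oddRows_append_replicate_true (δ : List Bool) (r : ℕ) :
    oddRows (δ ++ List.replicate r true) = oddRows δ := by
  induction r with
  | zero => simp
  | succ r ih => rw [List.replicate_succ', ← List.append_assoc, oddRows_concat, ih]; simp

lemma oddRows_pad (P Q : ℕ) (δ : List Bool) :
    oddRows (List.replicate P false ++ δ ++ List.replicate Q true) = oddRows δ := by
  rw [oddRows_append_replicate_true]
  induction P with
  | zero => simp
  | succ P ih => rw [List.replicate_succ, List.cons_append, oddRows_cons_false, ih]

lemma headI_le_of_pairwise_ge {a : ℕ} {s : List ℕ} (h : (a :: s).Pairwise (· ≥ ·)) :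
    s.headI ≤ a := by
  cases s with
  | nil => exact Nat.zero_le a
  | cons b s => exact (List.pairwise_cons.mp h).1 b List.mem_cons_self

lemma count_true_bseq {l : List ℕ} (hl : l.Pairwise (· ≥ ·)) : (bseq l).count true = l.headI := by
  induction l with
  | nil => rfl
  | cons a s ih =>
    simp [bseq, ih (List.pairwise_cons.mp hl).2, Nat.add_sub_cancel' (headI_le_of_pairwise_ge hl)]

lemma oddRows_bseq {l : List ℕ} (hl : l.Pairwise (· ≥ ·)) :
    oddRows (bseq l) = l.countP (fun x => decide (x % 2 = 1)) := by
  induction l with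
  | nil => rfl
  | cons a s ih =>
    have hs := (List.pairwise_cons.mp hl).2
    rw [bseq, oddRows_concat, oddRows_append_replicate_true, ih hs, List.count_append,
      count_true_bseq hs, List.count_replicate_self, List.countP_cons,
      Nat.add_sub_cancel' (headI_le_of_pairwise_ge hl)]
    simp only [Bool.false_eq_true, if_false, decide_eq_true_eq]
    split_ifs <;> omega

def moveTrue (d : List Bool) (u w : ℕ) : List Bool := (d.set u false).set w true

section moveTrue

variable {u w : ℕ}

lemma length_moveTrue : (moveTrue d u w).length = d.length := by simp [moveTrue]

lemma getElem?_moveTrue (hu : u < d.length) (hw : w < d.length) (k : ℕ) :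
    (moveTrue d u w)[k]? = if k = w then some true else if k = u then some false else d[k]? := by
  simp only [moveTrue, List.getElem?_set, List.length_set, hu, hw, if_true]
  by_cases hkw : w = k <;> by_cases hku : u = k <;> simp [hkw, hku, eq_comm]

lemma falseAt_moveTrue (hu : d[u]? = some true) (hw : d[w]? = some false) (k : ℕ) :
    falseAt (moveTrue d u w) k + (if k = w then 1 else 0) =
      falseAt d k + (if k = u then 1 else 0) := by
  rw [falseAt, falseAt, getElem?_moveTrue (lt_length_of_getElem?_eq_some hu)
    (lt_length_of_getElem?_eq_some hw)]
  by_cases hkw : k = w <;> by_cases hku : k = u <;> simp_all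

lemma trueAt_moveTrue (hu : d[u]? = some true) (hw : d[w]? = some false) (k : ℕ) :
    trueAt (moveTrue d u w) k + (if k = u then 1 else 0) =
      trueAt d k + (if k = w then 1 else 0) := by
  rw [trueAt, trueAt, getElem?_moveTrue (lt_length_of_getElem?_eq_some hu)
    (lt_length_of_getElem?_eq_some hw)]
  by_cases hkw : k = w <;> by_cases hku : k = u <;> simp_all

lemma count_false_moveTrue (hu : d[u]? = some true) (hw : d[w]? = some false) :
    (moveTrue d u w).count false = d.count false := by
  have h := sum_congr (s₁ := range d.length) rfl fun k _ => falseAt_moveTrue hu hw k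
  simp only [sum_add_distrib, sum_ite_eq', mem_range, lt_length_of_getElem?_eq_some hu,
    lt_length_of_getElem?_eq_some hw, if_true] at h
  rw [← sum_falseAt_eq_count, ← sum_falseAt_eq_count, length_moveTrue]
  omega

lemma truesBefore_moveTrue (hu : d[u]? = some true) (hw : d[w]? = some false) (p : ℕ) :
    truesBefore (moveTrue d u w) p + (if u < p then 1 else 0) =
      truesBefore d p + (if w < p then 1 else 0) := by
  have h := sum_congr (s₁ := range p) rfl fun k _ => trueAt_moveTrue hu hw k
  simpa only [truesBefore, sum_add_distrib, sum_ite_eq', mem_range] using h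

lemma oddRows_moveTrue (hu : d[u]? = some true) (hw : d[w]? = some false) (huw : u < w) :
    oddRows (moveTrue d u w) + 2 * ∑ k ∈ Ico (u + 1) w, falseAt d k * (truesBefore d k % 2) +
        truesBefore d w % 2 =
      oddRows d + truesBefore d u % 2 + ∑ k ∈ Ico (u + 1) w, falseAt d k := by
  have hwn := lt_length_of_getElem?_eq_some hw
  have hfu : falseAt d u = 0 := by simp [falseAt, hu]
  have hfw : falseAt d w = 1 := by simp [falseAt, hw]
  -- Only the rows strictly between `u` and `w` change parity: their `truesBefore` drops by one.
  have hpoint : ∀ p, falseAt (moveTrue d u w) p * (truesBefore (moveTrue d u w) p % 2) +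
        2 * (if p ∈ Ico (u + 1) w then falseAt d p * (truesBefore d p % 2) else 0) +
        (if w = p then truesBefore d w % 2 else 0) =
      falseAt d p * (truesBefore d p % 2) + (if u = p then truesBefore d u % 2 else 0) +
        (if p ∈ Ico (u + 1) w then falseAt d p else 0) := by
    intro p
    have hf := falseAt_moveTrue hu hw p
    have ht := truesBefore_moveTrue hu hw p
    rcases Nat.le_one_iff_eq_zero_or_eq_one.mp (falseAt_le_one d p) with h1 | h1 <;>
    rcases Nat.le_one_iff_eq_zero_or_eq_one.mp (falseAt_le_one (moveTrue d u w) p) with h2 | h2 <;>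
    rw [h1, h2] at hf ⊢ <;> simp only [zero_mul, one_mul, mem_Ico] <;>
    split_ifs at * <;> subst_vars <;> omega
  have hsum := sum_congr (s₁ := range d.length) rfl fun p _ => hpoint p
  have hIco : ∀ f : ℕ → ℕ, ∑ p ∈ range d.length, (if p ∈ Ico (u + 1) w then f p else 0) =
      ∑ p ∈ Ico (u + 1) w, f p := fun f => by
    rw [sum_ite_mem, inter_eq_right.mpr fun p hp => by simp at hp ⊢; omega]
  simp only [sum_add_distrib, ← mul_sum, hIco, sum_ite_eq, mem_range, hwn,
    lt_trans huw hwn, if_true] at hsum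
  rwa [oddRows, length_moveTrue]

end moveTrue

lemma sum_falseAt_mul_parity_modEq {a n : ℕ} (h : a + n ≤ d.length) :
    ∑ k ∈ range n, falseAt d (a + k) * (truesBefore d (a + k) % 2 + k % 2) ≡
      truesBefore d a * ∑ k ∈ range n, falseAt d (a + k) +
        (∑ k ∈ range n, falseAt d (a + k)).choose 2 [MOD 2] := by
  induction n with
  | zero => rfl
  | succ n ih =>
    specialize ih (by omega)
    have hT := truesBefore_add_sum_falseAt (d := d) (a := a) (n := n) (by omega)
    rw [sum_range_succ, sum_range_succ]
    set F := ∑ k ∈ range n, falseAt d (a + k)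
    rcases Nat.le_one_iff_eq_zero_or_eq_one.mp (falseAt_le_one d (a + n)) with hx | hx <;>
      rw [hx]
    · simpa using ih
    · rw [Nat.succ_choose_two, one_mul, mul_add_one]
      unfold Nat.ModEq at ih ⊢
      omega

-- `N`, `N'` count odd rows before and after the move, `F` the `false`s inside the ribbon,
-- `O` and `E` those at odd and even distance from its start, `S` those in odd rows.
lemma div_two_mod_two_of_moveTrue {N N' S F E O Tq Tw m : ℕ}
    (hA : N' + 2 * S + Tw % 2 = N + Tq % 2 + F) (hB : Tw + F = Tq + 2 * m)
    (hC : S + E ≡ (Tq + 1) * F + F.choose 2 [MOD 2]) (hD : F = O + E) :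
    N' / 2 % 2 = (N / 2 + O) % 2 := by
  have hchoose := Nat.choose_two_mod_two F
  have hmul := Nat.mul_mod (Tq + 1) F 2
  unfold Nat.ModEq at hC
  rcases Nat.mod_two_eq_zero_or_one (Tq + 1) with h | h <;>
    rcases Nat.mod_two_eq_zero_or_one F with h' | h' <;>
    simp only [h, h'] at hmul <;> omega

lemma epsilon_moveTrue_two_mul {q m : ℕ} (hq : d[q]? = some true)
    (hw : d[q + 2 * m]? = some false) :
    epsilon (moveTrue d q (q + 2 * m)) =
      epsilon d * (-1) ^ ∑ i ∈ range m, falseAt d (q + 1 + 2 * i) := by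
  obtain ⟨j, rfl⟩ : ∃ j, m = j + 1 :=
    Nat.exists_eq_add_one.mpr (Nat.pos_of_ne_zero fun h => by simp_all)
  have hlen := lt_length_of_getElem?_eq_some hw
  have hA := oddRows_moveTrue hq hw (by omega)
  have hB := truesBefore_add_sum_falseAt (d := d) (a := q + 1) (n := 2 * j + 1) (by omega)
  have hC := sum_falseAt_mul_parity_modEq (d := d) (a := q + 1) (n := 2 * j + 1) (by omega)
  have hTq : truesBefore d (q + 1) = truesBefore d q + 1 := by
    rw [truesBefore, truesBefore, sum_range_succ, trueAt, if_pos hq]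
  have hF := sum_range_two_mul_add_one (fun k => falseAt d (q + 1 + k)) j
  have hE := sum_range_two_mul_add_one (fun k => falseAt d (q + 1 + k) * (k % 2)) j
  simp only [Nat.mul_mod_right, Nat.mul_add_mod, mul_zero, sum_const_zero,
    zero_add] at hE
  rw [sum_Ico_eq_sum_range, sum_Ico_eq_sum_range,
    show q + 2 * (j + 1) - (q + 1) = 2 * j + 1 by omega] at hA
  rw [show q + 1 + (2 * j + 1) = q + 2 * (j + 1) by ring, hTq] at hB
  simp only [mul_add, sum_add_distrib, hE, hTq] at hC
  unfold epsilon
  rw [← pow_add, neg_one_pow_eq_pow_mod_two, neg_one_pow_eq_pow_mod_two (n := _ + _)]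
  congr 1
  exact div_two_mod_two_of_moveTrue (m := j + 1) hA (by omega) hC (by simpa [add_assoc] using hF)

def ribbonTerm (δ : List Bool) (m : ℕ) (g : List Bool → ℤ) (q : ℕ) : ℤ :=
  if q + m < δ.length ∧ δ.getD q false = true ∧ δ.getD (q + m) true = false then
    (-1) ^ (((δ.drop (q + 1)).take (m - 1)).count false) * g (moveTrue δ q (q + m))
  else 0

def ribbonSum (δ : List Bool) (m : ℕ) (g : List Bool → ℤ) : ℤ :=
  ∑ q ∈ range δ.length, ribbonTerm δ m g q

lemma ribbonTerm_eq (δ : List Bool) (m : ℕ) (g : List Bool → ℤ) (q : ℕ) :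
    ribbonTerm δ m g q =
      if δ[q]? = some true ∧ δ[q + m]? = some false then
        (-1) ^ (((δ.drop (q + 1)).take (m - 1)).count false) * g (moveTrue δ q (q + m))
      else 0 := by
  simp only [ribbonTerm, getD_false_eq_true_iff, getD_true_eq_false_iff]
  exact if_congr ⟨fun h => h.2, fun h => ⟨lt_length_of_getElem?_eq_some h.2, h⟩⟩ rfl rfl

lemma chiW_cons (δ : List Bool) (m : ℕ) (ν : List ℕ) :
    chiW δ (m :: ν) = ribbonSum δ m (chiW · ν) :=
  rfl

lemma psi2_cons (δ₀ δ₁ : List Bool) (m : ℕ) (ν : List ℕ) :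
    psi2 δ₀ δ₁ (m :: ν) = ribbonSum δ₀ m (psi2 · δ₁ ν) + ribbonSum δ₁ m (psi2 δ₀ · ν) :=
  rfl

lemma ribbonSum_congr {δ : List Bool} {m : ℕ} {g g' : List Bool → ℤ}
    (h : ∀ q, δ[q]? = some true → δ[q + m]? = some false →
      g (moveTrue δ q (q + m)) = g' (moveTrue δ q (q + m))) :
    ribbonSum δ m g = ribbonSum δ m g' := by
  refine sum_congr rfl fun q _ => ?_
  rw [ribbonTerm_eq, ribbonTerm_eq]
  split_ifs with hq
  · rw [h q hq.1 hq.2]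
  · rfl

structure PreservesRibbons (φ : List Bool → List Bool) : Prop where
  pairwise_iff : ∀ δ, (φ δ).Pairwise (· ≤ ·) ↔ δ.Pairwise (· ≤ ·)
  ribbonSum_eq : ∀ δ m g, ribbonSum (φ δ) m g = ribbonSum δ m (g ∘ φ)

namespace PreservesRibbons

variable {φ ψ : List Bool → List Bool}

lemma comp (hφ : PreservesRibbons φ) (hψ : PreservesRibbons ψ) : PreservesRibbons (φ ∘ ψ) where
  pairwise_iff δ := (hφ.pairwise_iff (ψ δ)).trans (hψ.pairwise_iff δ)
  ribbonSum_eq δ m g := (hφ.ribbonSum_eq (ψ δ) m g).trans (hψ.ribbonSum_eq δ m (g ∘ φ))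

lemma chiW_eq (hφ : PreservesRibbons φ) (δ : List Bool) (ν : List ℕ) :
    chiW (φ δ) ν = chiW δ ν := by
  induction ν generalizing δ with
  | nil => simp only [chiW, hφ.pairwise_iff]
  | cons m ν ih =>
    rw [chiW_cons, chiW_cons, hφ.ribbonSum_eq]
    exact congrArg _ (funext ih)

lemma psi2_eq (hφ : PreservesRibbons φ) (hψ : PreservesRibbons ψ) (δ₀ δ₁ : List Bool)
    (ν : List ℕ) : psi2 (φ δ₀) (ψ δ₁) ν = psi2 δ₀ δ₁ ν := by
  induction ν generalizing δ₀ δ₁ with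
  | nil => simp only [psi2, hφ.pairwise_iff, hψ.pairwise_iff]
  | cons m ν ih =>
    rw [psi2_cons, psi2_cons, hφ.ribbonSum_eq, hψ.ribbonSum_eq]
    exact congrArg₂ _ (congrArg _ (funext fun e => ih e δ₁))
      (congrArg _ (funext fun e => ih δ₀ e))

end PreservesRibbons

lemma preservesRibbons_id : PreservesRibbons fun δ => δ :=
  ⟨fun _ => Iff.rfl, fun _ _ _ => rfl⟩

lemma preservesRibbons_cons_false : PreservesRibbons (false :: ·) where
  pairwise_iff δ := by simp [List.pairwise_cons]
  ribbonSum_eq δ m g := by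
    rw [ribbonSum, List.length_cons, sum_range_succ']
    simp only [ribbonTerm, List.getD_cons_zero, Bool.false_eq_true, false_and, and_false,
      if_false, add_zero]
    refine sum_congr rfl fun q _ => ?_
    rw [show q + 1 + m = q + m + 1 by omega]
    simp [ribbonTerm, moveTrue, List.set_cons_succ]

lemma getD_append_true (δ : List Bool) (k : ℕ) : (δ ++ [true]).getD k true = δ.getD k true := by
  simp only [List.getD_eq_getElem?_getD, List.getElem?_append]
  split_ifs with h
  · rfl
  · simp [List.getElem?_eq_none (not_lt.mp h)]

lemma preservesRibbons_append_true : PreservesRibbons (· ++ [true]) where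
  pairwise_iff δ := by simp [List.pairwise_append]
  ribbonSum_eq δ m g := by
    rw [ribbonSum, List.length_append, List.length_singleton, sum_range_succ]
    have hlast : ribbonTerm (δ ++ [true]) m g δ.length = 0 := by
      rw [ribbonTerm, getD_append_true,
        List.getD_eq_default δ true (by omega : δ.length ≤ δ.length + m)]
      simp
    rw [hlast, add_zero]
    refine sum_congr rfl fun q hq => ?_
    have hq := mem_range.mp hq
    unfold ribbonTerm
    rw [getD_append_true, List.getD_append _ _ _ _ hq]
    by_cases hc : q + m < δ.length ∧ δ.getD q false = true ∧ δ.getD (q + m) true = false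
    · rw [if_pos ⟨by simp; omega, hc.2⟩, if_pos hc, List.drop_append_of_le_length (by omega),
        List.take_append_of_le_length (by simp; omega)]
      simp [moveTrue, hq, hc.1]
    · refine (if_neg fun h => hc ⟨?_, h.2⟩).trans (if_neg hc).symm
      exact lt_length_of_getElem?_eq_some (getD_true_eq_false_iff.mp h.2.2)

lemma preservesRibbons_pad (P Q : ℕ) :
    PreservesRibbons fun δ => List.replicate P false ++ δ ++ List.replicate Q true := by
  induction P with
  | zero =>
    induction Q with
    | zero => simpa using preservesRibbons_id
    | succ Q ih =>
      have h := preservesRibbons_append_true.comp ih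
      simpa [Function.comp_def, List.replicate_succ'] using h
  | succ P ih =>
    have h := preservesRibbons_cons_false.comp ih
    simpa [Function.comp_def, List.replicate_succ] using h

lemma chiW_pad (P Q : ℕ) (δ : List Bool) (ν : List ℕ) :
    chiW (List.replicate P false ++ δ ++ List.replicate Q true) ν = chiW δ ν :=
  (preservesRibbons_pad P Q).chiW_eq δ ν

lemma psi2_pad (P₀ Q₀ P₁ Q₁ : ℕ) (δ₀ δ₁ : List Bool) (ν : List ℕ) :
    psi2 (List.replicate P₀ false ++ δ₀ ++ List.replicate Q₀ true)
      (List.replicate P₁ false ++ δ₁ ++ List.replicate Q₁ true) ν = psi2 δ₀ δ₁ ν :=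
  (preservesRibbons_pad P₀ Q₀).psi2_eq (preservesRibbons_pad P₁ Q₁) δ₀ δ₁ ν

def interleave (r t : ℕ) (s : ℕ → List Bool) : List Bool :=
  (List.range (r * t)).map fun v => (s (v % r)).getD (v / r) false

section interleave

variable {r t : ℕ} {s : ℕ → List Bool}

lemma length_interleave : (interleave r t s).length = r * t := by simp [interleave]

lemma getElem?_interleave {c k : ℕ} (hc : c < r) (hk : k < t) :
    (interleave r t s)[r * k + c]? = some ((s c).getD k false) := by
  simp only [interleave, List.getElem?_map, List.getElem?_range (by nlinarith : r * k + c < r * t),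
    Option.map_some, Nat.mul_add_div (by omega : 0 < r), Nat.div_eq_of_lt hc, add_zero,
    Nat.mul_add_mod, Nat.mod_eq_of_lt hc]

lemma getElem?_interleave_of_length {c : ℕ} (hc : c < r) (hs : (s c).length = t) (k : ℕ) :
    (interleave r t s)[r * k + c]? = (s c)[k]? := by
  by_cases hk : k < t
  · rw [getElem?_interleave hc hk, List.getD_eq_getElem _ _ (hs ▸ hk), List.getElem?_eq_getElem]
  · rw [List.getElem?_eq_none (by rw [length_interleave]; nlinarith),
      List.getElem?_eq_none (by omega)]

lemma falseAt_interleave {c : ℕ} (hc : c < r) (hs : (s c).length = t) (k : ℕ) :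
    falseAt (interleave r t s) (r * k + c) = falseAt (s c) k := by
  rw [falseAt, falseAt, getElem?_interleave_of_length hc hs]

lemma interleave_update_moveTrue {c u w : ℕ} (hc : c < r) (hs : (s c).length = t) (hu : u < t)
    (hw : w < t) :
    interleave r t (Function.update s c (moveTrue (s c) u w)) =
      moveTrue (interleave r t s) (r * u + c) (r * w + c) := by
  have hr : 0 < r := by omega
  have hlen : ∀ k, k < t → r * k + c < (interleave r t s).length := fun k hk => by
    rw [length_interleave]; nlinarith
  apply List.ext_getElem?
  intro v
  by_cases hv : v < r * t
  · rw [← Nat.div_add_mod v r]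
    have hk : v / r < t := (Nat.div_lt_iff_lt_mul hr).mpr (by rwa [mul_comm])
    have hc' := Nat.mod_lt v hr
    rw [getElem?_interleave hc' hk, getElem?_moveTrue (hlen u hu) (hlen w hw),
      getElem?_interleave hc' hk]
    simp only [Nat.mul_add_eq_mul_add_iff hc' hc]
    by_cases hcc : v % r = c
    · subst hcc
      simp only [Function.update_self, and_true, List.getD_eq_getElem?_getD,
        getElem?_moveTrue (hs ▸ hu) (hs ▸ hw)]
      split_ifs <;> rfl
    · simp [hcc]
  · rw [List.getElem?_eq_none (by rw [length_interleave]; omega),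
      List.getElem?_eq_none (by rw [length_moveTrue, length_interleave]; omega)]

end interleave

lemma epsilon_mul_ribbonTerm_interleave {t c u m : ℕ} {s : ℕ → List Bool}
    (hc : c < 2) (hsc : (s c).length = t) (f : List Bool → ℤ) :
    epsilon (interleave 2 t s) * ribbonTerm (interleave 2 t s) (2 * m) f (2 * u + c) =
      ribbonTerm (s c) m (fun e => epsilon (interleave 2 t (Function.update s c e)) *
        f (interleave 2 t (Function.update s c e))) u := by
  have hpos : ∀ k, (interleave 2 t s)[2 * k + c]? = (s c)[k]? :=
    getElem?_interleave_of_length hc hsc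
  rw [ribbonTerm_eq, ribbonTerm_eq, show 2 * u + c + 2 * m = 2 * (u + m) + c by ring, hpos, hpos]
  split_ifs with h
  swap
  · exact mul_zero _
  obtain ⟨hu, hw⟩ := h
  obtain ⟨j, rfl⟩ : ∃ j, m = j + 1 :=
    Nat.exists_eq_add_one.mpr (Nat.pos_of_ne_zero fun h => by simp_all)
  have hut : u + (j + 1) < t := hsc ▸ lt_length_of_getElem?_eq_some hw
  have hmove := interleave_update_moveTrue (u := u) hc hsc (by omega) hut
  have hZu : (interleave 2 t s)[2 * u + c]? = some true := by rw [hpos]; exact hu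
  have hZw : (interleave 2 t s)[2 * u + c + 2 * (j + 1)]? = some false := by
    rw [show 2 * u + c + 2 * (j + 1) = 2 * (u + (j + 1)) + c by ring, hpos]; exact hw
  have hsign := epsilon_moveTrue_two_mul hZu hZw
  rw [show 2 * u + c + 2 * (j + 1) = 2 * (u + (j + 1)) + c by ring, ← hmove] at hsign
  rw [← hmove, hsign,
    count_false_take_drop (by rw [length_interleave]; omega),
    count_false_take_drop (by omega), show 2 * (j + 1) - 1 = 2 * j + 1 by omega,
    sum_range_two_mul_add_one, Nat.add_sub_cancel]
  have hcomp : ∀ i, falseAt (interleave 2 t s) (2 * u + c + 1 + (2 * i + 1)) =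
      falseAt (s c) (u + 1 + i) := fun i => by
    rw [show 2 * u + c + 1 + (2 * i + 1) = 2 * (u + 1 + i) + c by ring, falseAt_interleave hc hsc]
  simp only [hcomp, pow_add]
  ring

lemma epsilon_mul_ribbonSum_interleave {t : ℕ} {s : ℕ → List Bool}
    (hs : ∀ j < 2, (s j).length = t) (m : ℕ) (f : List Bool → ℤ) :
    epsilon (interleave 2 t s) * ribbonSum (interleave 2 t s) (2 * m) f =
      ribbonSum (s 0) m (fun e => epsilon (interleave 2 t (Function.update s 0 e)) *
        f (interleave 2 t (Function.update s 0 e))) +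
      ribbonSum (s 1) m (fun e => epsilon (interleave 2 t (Function.update s 1 e)) *
        f (interleave 2 t (Function.update s 1 e))) := by
  rw [ribbonSum, length_interleave, mul_sum, sum_range_two_mul, ribbonSum, ribbonSum,
    hs 0 two_pos, hs 1 one_lt_two]
  congr 1 <;> refine sum_congr rfl fun u _ => ?_
  · exact epsilon_mul_ribbonTerm_interleave two_pos (hs 0 two_pos) f
  · exact epsilon_mul_ribbonTerm_interleave one_lt_two (hs 1 one_lt_two) f

lemma eq_replicate_append_replicate_of_pairwise {d : List Bool} (h : d.Pairwise (· ≤ ·)) :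
    d = List.replicate (d.count false) false ++ List.replicate (d.count true) true := by
  induction d with
  | nil => rfl
  | cons b l ih =>
    obtain ⟨hb, hl⟩ := List.pairwise_cons.mp h
    cases b
    · simpa [List.replicate_succ] using ih hl
    · have hall : ∀ x ∈ l, x = true := fun x hx => by
        have := hb x hx
        cases x
        · exact absurd this (by decide)
        · rfl
      rw [List.eq_replicate_length.mpr hall]
      simp [List.count_replicate, List.replicate_succ]

lemma getElem_of_pairwise {d : List Bool} (h : d.Pairwise (· ≤ ·)) {k : ℕ} (hk : k < d.length) :
    d[k] = decide (d.count false ≤ k) := by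
  have hd := eq_replicate_append_replicate_of_pairwise h
  set a := d.count false
  refine Option.some.inj ?_
  rw [← List.getElem?_eq_getElem hk]
  rw [hd] at hk ⊢
  rw [List.length_append, List.length_replicate, List.length_replicate] at hk
  simp only [List.getElem?_append, List.length_replicate, List.getElem?_replicate]
  split_ifs <;> first | omega | simp; omega

lemma epsilon_of_pairwise {d : List Bool} (h : d.Pairwise (· ≤ ·)) : epsilon d = 1 := by
  rw [epsilon, eq_replicate_append_replicate_of_pairwise h,
    ← List.append_nil (List.replicate _ false), oddRows_pad]
  rfl

lemma getElem_interleave_of_length {r t c k : ℕ} {s : ℕ → List Bool} (hc : c < r)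
    (hs : (s c).length = t) (hk : r * k + c < (interleave r t s).length) (hk' : k < (s c).length) :
    (interleave r t s)[r * k + c] = (s c)[k] :=
  Option.some.inj (by
    rw [← List.getElem?_eq_getElem, ← List.getElem?_eq_getElem,
      getElem?_interleave_of_length hc hs])

lemma pairwise_interleave_iff {t : ℕ} {s : ℕ → List Bool} (hs : ∀ j < 2, (s j).length = t)
    (hcount : (s 0).count false = (s 1).count false) :
    (interleave 2 t s).Pairwise (· ≤ ·) ↔ (s 0).Pairwise (· ≤ ·) ∧ (s 1).Pairwise (· ≤ ·) := by
  have hlen : ∀ c < 2, ∀ k < t, 2 * k + c < (interleave 2 t s).length := fun c hc k hk => by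
    rw [length_interleave]; omega
  have hcomp : ∀ c < 2, (interleave 2 t s).Pairwise (· ≤ ·) → (s c).Pairwise (· ≤ ·) := by
    intro c hc h
    rw [List.pairwise_iff_getElem] at h ⊢
    intro i j hi hj hij
    rw [← getElem_interleave_of_length hc (hs c hc) (hlen c hc i (hs c hc ▸ hi)),
      ← getElem_interleave_of_length hc (hs c hc) (hlen c hc j (hs c hc ▸ hj))]
    exact h _ _ _ _ (by omega)
  refine ⟨fun h => ⟨hcomp 0 (by norm_num) h, hcomp 1 (by norm_num) h⟩, fun ⟨h0, h1⟩ => ?_⟩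
  have hsorted : ∀ c < 2, (s c).Pairwise (· ≤ ·) ∧ (s c).count false = (s 0).count false := by
    intro c hc
    obtain rfl | rfl : c = 0 ∨ c = 1 := by omega
    exacts [⟨h0, rfl⟩, ⟨h1, hcount.symm⟩]
  have hval : ∀ c < 2, ∀ k (hk : 2 * k + c < (interleave 2 t s).length),
      (interleave 2 t s)[2 * k + c] = decide ((s 0).count false ≤ k) := by
    intro c hc k hk
    have hkt : k < (s c).length := by rw [length_interleave] at hk; rw [hs c hc]; omega
    rw [getElem_interleave_of_length hc (hs c hc) hk hkt, getElem_of_pairwise (hsorted c hc).1,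
      (hsorted c hc).2]
  rw [List.pairwise_iff_getElem]
  intro i j hi hj hij
  obtain ⟨k, c, hc, rfl⟩ : ∃ k c, c < 2 ∧ i = 2 * k + c :=
    ⟨i / 2, i % 2, Nat.mod_lt _ two_pos, (Nat.div_add_mod i 2).symm⟩
  obtain ⟨k', c', hc', rfl⟩ : ∃ k c, c < 2 ∧ j = 2 * k + c :=
    ⟨j / 2, j % 2, Nat.mod_lt _ two_pos, (Nat.div_add_mod j 2).symm⟩
  rw [hval c hc k hi, hval c' hc' k' hj]
  by_cases ha : (s 0).count false ≤ k
  · simp [ha, show (s 0).count false ≤ k' by omega]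
  · simp [ha]

lemma length_update_moveTrue {t c q w : ℕ} {s : ℕ → List Bool} (hs : ∀ j < 2, (s j).length = t) :
    ∀ j < 2, (Function.update s c (moveTrue (s c) q w) j).length = t := by
  intro j hj
  rcases eq_or_ne j c with rfl | hjc
  · rw [Function.update_self, length_moveTrue, hs j hj]
  · rw [Function.update_of_ne hjc, hs j hj]

lemma count_false_update_moveTrue {c q w : ℕ} {s : ℕ → List Bool}
    (hcount : (s 0).count false = (s 1).count false) (hc : c < 2) (hq : (s c)[q]? = some true)
    (hw : (s c)[w]? = some false) :
    (Function.update s c (moveTrue (s c) q w) 0).count false =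
      (Function.update s c (moveTrue (s c) q w) 1).count false := by
  obtain rfl | rfl : c = 0 ∨ c = 1 := by omega
  all_goals simp [count_false_moveTrue hq hw, hcount]

theorem psi2_eq_epsilon_mul_chiW_interleave (μ : List ℕ) {t : ℕ} {s : ℕ → List Bool}
    (hs : ∀ j < 2, (s j).length = t) (hcount : (s 0).count false = (s 1).count false) :
    psi2 (s 0) (s 1) μ =
      epsilon (interleave 2 t s) * chiW (interleave 2 t s) (μ.map fun x => 2 * x) := by
  induction μ generalizing s with
  | nil =>
    simp only [psi2, chiW, List.map_nil, ← pairwise_interleave_iff hs hcount]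
    split_ifs with h
    · rw [epsilon_of_pairwise h, mul_one]
    · rw [mul_zero]
  | cons m μ ih =>
    rw [psi2_cons, List.map_cons, chiW_cons, epsilon_mul_ribbonSum_interleave hs]
    congr 1 <;> refine ribbonSum_congr fun q hq hw => ?_
    · simpa using
        ih (length_update_moveTrue hs) (count_false_update_moveTrue hcount two_pos hq hw)
    · simpa using
        ih (length_update_moveTrue hs) (count_false_update_moveTrue hcount one_lt_two hq hw)

lemma count_false_eq_of_anchorAt {d : List Bool} {i : ℕ} (h : AnchorAt d i) :
    d.count false = min i d.length := by
  have htake := List.count_true_add_count_false (d.take i)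
  have hsplit : (d.take i ++ d.drop i).count false = _ := List.count_append
  rw [List.take_append_drop] at hsplit
  rw [List.length_take] at htake
  unfold AnchorAt at h
  omega

end BoundaryWord

open BoundaryWord

theorem luebeck_prasad_identity_r_two_general
    (l : List ℕ) (hl : IsPartition l)
    (Λ : ℕ → List ℕ)
    (hphi : IsPhi 2 Λ l) (μ : List ℕ) :
    psi2 (bseq (Λ 0)) (bseq (Λ 1)) μ =
      (-1 : ℤ) ^ ((l.countP (fun x => decide (x % 2 = 1))) / 2) *
        chiW (bseq l) (μ.map (fun x => 2 * x)) := by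
  obtain ⟨t, _, s, _, _, hs, _, _, hpad⟩ := hphi
  have hlen : ∀ j < 2, (s j).length = t := fun j hj => (hs j hj).2.1
  have hcount : (s 0).count false = (s 1).count false := by
    rw [count_false_eq_of_anchorAt (hs 0 two_pos).2.2, hlen 0 two_pos,
      count_false_eq_of_anchorAt (hs 1 one_lt_two).2.2, hlen 1 one_lt_two]
  change _ = interleave 2 t s at hpad
  calc psi2 (bseq (Λ 0)) (bseq (Λ 1)) μ = psi2 (s 0) (s 1) μ := by
        rw [(hs 0 two_pos).1, (hs 1 one_lt_two).1, psi2_pad]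
    _ = epsilon (interleave 2 t s) * chiW (interleave 2 t s) (μ.map fun x => 2 * x) :=
        psi2_eq_epsilon_mul_chiW_interleave μ hlen hcount
    _ = _ := by rw [← hpad, epsilon, oddRows_pad, oddRows_bseq hl.1, chiW_pad]

theorem luebeck_prasad_identity_r_two
    (n : ℕ) (l : List ℕ) (hl : IsPartition l) (hsum : l.sum = 2 * n)
    (hcore : EmptyCore 2 l) (Λ : ℕ → List ℕ) (hΛ : ∀ j < 2, IsPartition (Λ j))
    (hphi : IsPhi 2 Λ l) (μ : List ℕ) (hμ : IsPartition μ) (hμsum : μ.sum = n) :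
    psi2 (bseq (Λ 0)) (bseq (Λ 1)) μ =
      (-1 : ℤ) ^ ((l.countP (fun x => decide (x % 2 = 1))) / 2) *
        chiW (bseq l) (μ.map (fun x => 2 * x)) :=
  luebeck_prasad_identity_r_two_general l hl Λ hphi μ
end

section
/- For every partition λ of 2n with an empty 2-core, sign_2(λ) = (−1)^{odd(λ)/2}, where odd(λ) is the number of odd parts of λ and sign_2(λ) = (−1)^{inv_2(λ) − inv_2(∅)} with inv_2 the inversion number of the mod-2 row-color sequence. -/
/-! Induct along a sequence of domino removals witnessing the empty 2-core. A horizontal domino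
shortens one row by 2 and changes neither the row colours nor the parities of the parts. A
vertical domino shortens two rows of equal length by 1: this swaps two adjacent, distinct colours,
which changes the inversion number by one, and changes the number of odd parts by ±2. So both
sides of the formula change sign together. -/

section Inversions

variable {α : Type*} [LinearOrder α]

lemma invOn_cons_s16 (a : α) (s : List α) :
    invOn (a :: s) = s.countP (fun b => decide (b < a)) + invOn s := by
  simp [invOn, List.countP_eq_length_filter]

lemma invOn_append_cons_cons_of_lt {a b : α} (hab : a < b) (u v : List α) :
    invOn (u ++ b :: a :: v) = invOn (u ++ a :: b :: v) + 1 := by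
  induction u with
  | nil =>
    simp [invOn_cons_s16, hab, not_lt.2 hab.le]
    omega
  | cons c u ih =>
    simp only [List.cons_append, invOn_cons_s16, ih, List.countP_append, List.countP_cons]
    omega

lemma neg_one_pow_invOn_swap {a b : α} (hab : a ≠ b) (u v : List α) :
    (-1 : ℤ) ^ invOn (u ++ a :: b :: v) = -(-1) ^ invOn (u ++ b :: a :: v) := by
  rcases hab.lt_or_gt with h | h
  · rw [invOn_append_cons_cons_of_lt h, pow_succ, mul_neg_one, neg_neg]
  · rw [invOn_append_cons_cons_of_lt h, pow_succ, mul_neg_one]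

end Inversions

lemma map_range_getD_eq_append_replicate {α : Type*} {l : List α} {k : ℕ} (d : α)
    (hk : l.length ≤ k) :
    (List.range k).map (l.getD · d) = l ++ List.replicate (k - l.length) d := by
  refine List.ext_getElem (by simp; omega) fun j h₁ h₂ => ?_
  simp only [List.getElem_map, List.getElem_range, List.getElem_append, List.getElem_replicate]
  split <;> simp_all

lemma exists_map_range_eq_of_eq_off_pair {α : Type*} {f g : ℕ → α} {i k : ℕ}
    (hik : i + 2 ≤ k) (h : ∀ j, j ≠ i → j ≠ i + 1 → f j = g j) :
    ∃ u v, (List.range k).map f = u ++ f i :: f (i + 1) :: v ∧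
      (List.range k).map g = u ++ g i :: g (i + 1) :: v := by
  obtain ⟨m, rfl⟩ : ∃ m, k = i + 2 + m := ⟨k - (i + 2), by omega⟩
  have hu : (List.range i).map f = (List.range i).map g :=
    List.map_congr_left fun j hj => h j (by simp at hj; omega) (by simp at hj; omega)
  have hv : (List.range m).map (f <| i + 2 + ·) = (List.range m).map (g <| i + 2 + ·) :=
    List.map_congr_left fun _ _ => h _ (by omega) (by omega)
  refine ⟨(List.range i).map f, (List.range m).map (f <| i + 2 + ·), ?_, ?_⟩ <;>
    simp [List.range_add, List.range_succ, hu, hv, Function.comp_def]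

def HorizontalDomino (l l' : List ℕ) (i : ℕ) : Prop :=
  l.getD i 0 = l'.getD i 0 + 2 ∧ ∀ j, j ≠ i → l.getD j 0 = l'.getD j 0

def VerticalDomino (l l' : List ℕ) (i : ℕ) : Prop :=
  l.getD i 0 = l'.getD i 0 + 1 ∧ l.getD (i + 1) 0 = l'.getD (i + 1) 0 + 1 ∧
    l'.getD i 0 = l'.getD (i + 1) 0 ∧ ∀ j, j ≠ i → j ≠ i + 1 → l.getD j 0 = l'.getD j 0

section Cells

variable {l l' : List ℕ}

lemma getD_le_of_cellSet_subset (h : cellSet l' ⊆ cellSet l) (i : ℕ) :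
    l'.getD i 0 ≤ l.getD i 0 :=
  not_lt.1 fun hlt => lt_irrefl (l.getD i 0) (h (show (i, l.getD i 0) ∈ cellSet l' from hlt))

lemma length_le_of_peelRibbon {m : ℕ} (h : PeelRibbon m l l') : l'.length ≤ l.length := by
  by_contra! hlt
  have hpos : 0 < l'.getD l.length 0 := by
    rw [List.getD_eq_getElem _ _ hlt]
    exact h.1.2 _ (List.getElem_mem _)
  have hle := getD_le_of_cellSet_subset h.2.1.subset l.length
  rw [List.getD_eq_default _ _ le_rfl] at hle
  omega

lemma row_sdiff_cellSet (r : ℕ) :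
    {c | (r, c) ∈ cellSet l \ cellSet l'} = Set.Ico (l'.getD r 0) (l.getD r 0) := by
  ext c
  simp only [cellSet, Set.mem_ofPred_eq, Set.mem_sdiff, Set.mem_Ico]
  omega

variable {r : ℕ}

lemma getD_eq_of_row_sdiff_cellSet_eq_empty (hsub : cellSet l' ⊆ cellSet l)
    (h : {x | (r, x) ∈ cellSet l \ cellSet l'} = ∅) : l.getD r 0 = l'.getD r 0 := by
  rw [row_sdiff_cellSet, Set.Ico_eq_empty_iff] at h
  exact le_antisymm (not_lt.1 h) (getD_le_of_cellSet_subset hsub r)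

lemma getD_eq_of_row_sdiff_cellSet_eq_singleton {y : ℕ}
    (h : {x | (r, x) ∈ cellSet l \ cellSet l'} = {y}) :
    l.getD r 0 = l'.getD r 0 + 1 ∧ l'.getD r 0 = y := by
  rw [row_sdiff_cellSet] at h
  have hy : y ∈ Set.Ico (l'.getD r 0) (l.getD r 0) := h ▸ Set.mem_singleton y
  have hcard := congrArg Set.ncard h
  rw [Set.ncard_Ico_nat, Set.ncard_singleton] at hcard
  rw [Set.mem_Ico] at hy
  omega

lemma getD_eq_of_row_sdiff_cellSet_eq_pair {y z : ℕ} (hyz : y ≠ z)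
    (h : {x | (r, x) ∈ cellSet l \ cellSet l'} = {y, z}) :
    l.getD r 0 = l'.getD r 0 + 2 := by
  have hcard := congrArg Set.ncard h
  rw [row_sdiff_cellSet, Set.ncard_Ico_nat, Set.ncard_pair hyz] at hcard
  omega

end Cells

lemma not_cellAdj_self (p : ℕ × ℕ) : ¬ CellAdj p p := by
  unfold CellAdj
  omega

lemma cellAdj_of_connSet_pair {p q : ℕ × ℕ} (hpq : p ≠ q) (h : ConnSet {p, q}) :
    CellAdj p q := by
  rcases (h p (by simp) q (by simp)).cases_head with rfl | ⟨c, ⟨hc, hadj⟩, -⟩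
  · exact absurd rfl hpq
  · rcases hc with rfl | rfl
    · exact absurd hadj (not_cellAdj_self _)
    · exact hadj

lemma exists_domino_of_peelRibbon_two {l l' : List ℕ} (h : PeelRibbon 2 l l') :
    ∃ i, HorizontalDomino l l' i ∨ VerticalDomino l l' i := by
  obtain ⟨-, hsub, hcard, hconn, -⟩ := h
  obtain ⟨⟨a, b⟩, ⟨c, d⟩, hpq, hD⟩ := Set.ncard_eq_two.1 hcard
  have hrow {r : ℕ} {s : Set ℕ}
      (hs : {x | (r, x) ∈ ({(a, b), (c, d)} : Set (ℕ × ℕ))} = s) :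
      {x | (r, x) ∈ cellSet l \ cellSet l'} = s :=
    hD ▸ hs
  have hother {j : ℕ} (hja : j ≠ a) (hjc : j ≠ c) : l.getD j 0 = l'.getD j 0 :=
    getD_eq_of_row_sdiff_cellSet_eq_empty hsub.subset (hrow (by ext; simp [hja, hjc]))
  by_cases hac : a = c
  · subst hac
    have hbd : b ≠ d := fun h => hpq (by rw [h])
    exact ⟨a, Or.inl ⟨getD_eq_of_row_sdiff_cellSet_eq_pair hbd (hrow (by ext; simp)),
      fun j hj => hother hj hj⟩⟩
  obtain ⟨ha, rfl⟩ := getD_eq_of_row_sdiff_cellSet_eq_singleton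
    (hrow (r := a) (s := {b}) (by ext; simp [hac]))
  obtain ⟨hc, rfl⟩ := getD_eq_of_row_sdiff_cellSet_eq_singleton
    (hrow (r := c) (s := {d}) (by ext; simp [Ne.symm hac]))
  rcases cellAdj_of_connSet_pair hpq (hD ▸ hconn) with ⟨h, -⟩ | ⟨hbd, rfl | rfl⟩
  · exact absurd h hac
  · exact ⟨a, Or.inr ⟨ha, hc, hbd, fun j hj hj' => hother hj hj'⟩⟩
  · exact ⟨c, Or.inr ⟨hc, ha, hbd.symm, fun j hj hj' => hother hj' hj⟩⟩

def oddParts (l : List ℕ) : ℕ := l.countP (fun x => decide (x % 2 = 1))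

lemma oddParts_eq_countP_map_range {l : List ℕ} {k : ℕ} (hk : l.length ≤ k) :
    oddParts l = ((List.range k).map (l.getD · 0)).countP (fun x => decide (x % 2 = 1)) := by
  rw [map_range_getD_eq_append_replicate 0 hk, List.countP_append, List.countP_replicate]
  rfl

lemma neg_one_pow_add_two_div_two (m : ℕ) : (-1 : ℤ) ^ ((m + 2) / 2) = -(-1) ^ (m / 2) := by
  rw [Nat.add_div_right m two_pos, pow_succ, mul_neg_one]

namespace HorizontalDomino

variable {l l' : List ℕ} {i : ℕ}

lemma rcs_two_eq (h : HorizontalDomino l l' i) (k : ℕ) : rcs 2 k l = rcs 2 k l' := by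
  refine List.map_congr_left fun j hj => ?_
  by_cases hji : j = i
  · rw [List.mem_range] at hj
    rw [hji, h.1]
    omega
  · rw [h.2 j hji]

lemma oddParts_eq (h : HorizontalDomino l l' i) : oddParts l = oddParts l' := by
  rw [oddParts_eq_countP_map_range (k := l.length + l'.length) (by omega),
    oddParts_eq_countP_map_range (k := l.length + l'.length) (by omega),
    List.countP_map, List.countP_map]
  refine List.countP_congr fun j _ => ?_
  by_cases hj : j = i
  · subst hj
    simp only [Function.comp_apply, h.1, decide_eq_true_eq]
    omega
  · simp only [Function.comp_apply, h.2 j hj]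

end HorizontalDomino

namespace VerticalDomino

variable {l l' : List ℕ} {i : ℕ}

lemma succ_lt_length (h : VerticalDomino l l' i) : i + 1 < l.length := by
  by_contra! hle
  have := h.2.1
  rw [List.getD_eq_default _ _ hle] at this
  omega

lemma neg_one_pow_invOn_rcs_two (h : VerticalDomino l l' i) {k : ℕ} (hk : l.length ≤ k) :
    (-1 : ℤ) ^ invOn (rcs 2 k l) = -(-1) ^ invOn (rcs 2 k l') := by
  have hik := h.succ_lt_length
  obtain ⟨hi, hi', heq, hoff⟩ := h
  obtain ⟨u, v, hl, hl'⟩ := exists_map_range_eq_of_eq_off_pair (i := i) (k := k) (by omega)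
    (f := fun j => (l.getD j 0 + k - j - 1) % 2) (g := fun j => (l'.getD j 0 + k - j - 1) % 2)
    (fun j hj hj' => by rw [hoff j hj hj'])
  unfold rcs
  rw [hl, hl']
  have hswap : (l'.getD i 0 + k - i - 1) % 2 = (l.getD (i + 1) 0 + k - (i + 1) - 1) % 2 ∧
      (l'.getD (i + 1) 0 + k - (i + 1) - 1) % 2 = (l.getD i 0 + k - i - 1) % 2 := by
    omega
  rw [hswap.1, hswap.2]
  exact neg_one_pow_invOn_swap (by omega) u v

lemma oddParts_eq_add_two_or (h : VerticalDomino l l' i) :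
    oddParts l = oddParts l' + 2 ∨ oddParts l' = oddParts l + 2 := by
  have hik := h.succ_lt_length
  obtain ⟨hi, hi', heq, hoff⟩ := h
  set k := l.length + l'.length
  obtain ⟨u, v, hl, hl'⟩ := exists_map_range_eq_of_eq_off_pair (i := i) (k := k) (by omega)
    (f := (l.getD · 0)) (g := (l'.getD · 0)) hoff
  rw [oddParts_eq_countP_map_range (k := k) (by omega),
    oddParts_eq_countP_map_range (k := k) (by omega), hl, hl']
  simp only [List.countP_append, List.countP_cons, hi, hi', heq, decide_eq_true_eq]
  split_ifs <;> omega

lemma neg_one_pow_oddParts_div_two (h : VerticalDomino l l' i) :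
    (-1 : ℤ) ^ (oddParts l / 2) = -(-1) ^ (oddParts l' / 2) := by
  rcases h.oddParts_eq_add_two_or with h | h
  · rw [h, neg_one_pow_add_two_div_two]
  · rw [h, neg_one_pow_add_two_div_two, neg_neg]

end VerticalDomino

theorem sign_two_eq_odd_parts_formula_general
    (k : ℕ) (l : List ℕ)
    (hcore : EmptyCore 2 l) (hk : l.length ≤ k) :
    (-1 : ℤ) ^ invOn (rcs 2 k l) * (-1 : ℤ) ^ invOn (rcs 2 k []) =
      (-1 : ℤ) ^ ((l.countP (fun x => decide (x % 2 = 1))) / 2) := by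
  change _ = (-1 : ℤ) ^ (oddParts l / 2)
  induction hcore using Relation.ReflTransGen.head_induction_on with
  | refl => simp [oddParts, ← pow_add, ← two_mul]
  | head hstep _ ih =>
    have ih := ih ((length_le_of_peelRibbon hstep).trans hk)
    obtain ⟨i, hhor | hver⟩ := exists_domino_of_peelRibbon_two hstep
    · rwa [hhor.rcs_two_eq, hhor.oddParts_eq]
    · rw [hver.neg_one_pow_invOn_rcs_two hk, hver.neg_one_pow_oddParts_div_two, neg_mul, ih]

theorem sign_two_eq_odd_parts_formula
    (n k : ℕ) (l : List ℕ) (hl : IsPartition l) (hsum : l.sum = 2 * n)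
    (hcore : EmptyCore 2 l) (hk : l.length ≤ k) :
    (-1 : ℤ) ^ invOn (rcs 2 k l) * (-1 : ℤ) ^ invOn (rcs 2 k []) =
      (-1 : ℤ) ^ ((l.countP (fun x => decide (x % 2 = 1))) / 2) :=
  sign_two_eq_odd_parts_formula_general k l hcore hk
end
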